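/- arXiv:2408.12131 — 2 statements merged into one kernel-verified Lean document; each statement's English description precedes it below -/
import Mathlib

section
/- Let U be uniformly distributed on the unit sphere S^{p-1} in R^p and let A be a p×p real symmetric matrix. Then E[(U^T A U)^4] = (tr(A)^4 + 12 tr(A)^2 tr(A^2) + 12 tr(A^2)^2 + 32 tr(A) tr(A^3) + 48 tr(A^4)) / (p(p+2)(p+4)(p+6)). -/
open MeasureTheory ProbabilityTheory Matrix Filter
open scoped RealInnerProductSpace

noncomputable section

/-- `U` is uniformly distributed on the unit sphere `S^{p-1}`: it is measurable,
supported on the sphere, and its law is invariant under every linear isometry. -/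
def IsUniformOnSphere {Ω : Type*} [MeasureSpace Ω] {p : ℕ}
    (U : Ω → EuclideanSpace ℝ (Fin p)) : Prop :=
  Measurable U ∧ (∀ᵐ ω ∂(ℙ : Measure Ω), ‖U ω‖ = 1) ∧
    ∀ L : EuclideanSpace ℝ (Fin p) ≃ₗᵢ[ℝ] EuclideanSpace ℝ (Fin p),
      Measure.map (fun ω => L (U ω)) ℙ = Measure.map U ℙ

namespace SM
open Real intervalIntegral
set_option linter.unusedSectionVars false
set_option maxHeartbeats 1000000


variable {p : ℕ}

lemma sum_split {M : Type*} [AddCommMonoid M] (i j : Fin p) (hij : i ≠ j) (f : Fin p → M) :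
    ∑ n, f n = f i + (f j + ∑ n ∈ (Finset.univ.erase i).erase j, f n) := by
  rw [← Finset.add_sum_erase _ f (Finset.mem_univ i),
    ← Finset.add_sum_erase _ f (Finset.mem_erase.mpr ⟨hij.symm, Finset.mem_univ j⟩)]

lemma prod_split {M : Type*} [CommMonoid M] (i j : Fin p) (hij : i ≠ j) (f : Fin p → M) :
    ∏ n, f n = f i * (f j * ∏ n ∈ (Finset.univ.erase i).erase j, f n) := by
  rw [← Finset.mul_prod_erase _ f (Finset.mem_univ i),
    ← Finset.mul_prod_erase _ f (Finset.mem_erase.mpr ⟨hij.symm, Finset.mem_univ j⟩)]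

/-- rotation by angle θ in the (i,j) coordinate plane -/
def rotFun (i j : Fin p) (θ : ℝ) (x : EuclideanSpace ℝ (Fin p)) : EuclideanSpace ℝ (Fin p) :=
  WithLp.toLp 2 (fun n => if n = i then cos θ * x i + sin θ * x j
    else if n = j then cos θ * x j - sin θ * x i else x n)

lemma rotFun_apply_i (i j : Fin p) (θ : ℝ) (x : EuclideanSpace ℝ (Fin p)) :
    rotFun i j θ x i = cos θ * x i + sin θ * x j := by simp [rotFun]

lemma rotFun_apply_j (i j : Fin p) (hij : i ≠ j) (θ : ℝ) (x : EuclideanSpace ℝ (Fin p)) :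
    rotFun i j θ x j = cos θ * x j - sin θ * x i := by simp [rotFun, hij.symm]

lemma rotFun_apply_ne (i j n : Fin p) (hni : n ≠ i) (hnj : n ≠ j) (θ : ℝ)
    (x : EuclideanSpace ℝ (Fin p)) : rotFun i j θ x n = x n := by simp [rotFun, hni, hnj]

def rotL (i j : Fin p) (θ : ℝ) : EuclideanSpace ℝ (Fin p) →ₗ[ℝ] EuclideanSpace ℝ (Fin p) where
  toFun := rotFun i j θ
  map_add' x y := by
    apply PiLp.ext; intro n
    simp only [rotFun, PiLp.add_apply, PiLp.toLp_apply]
    split_ifs <;> ring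
  map_smul' c x := by
    apply PiLp.ext; intro n
    simp only [rotFun, PiLp.smul_apply, PiLp.toLp_apply, smul_eq_mul, RingHom.id_apply]
    split_ifs <;> ring

lemma rot_inv (i j : Fin p) (hij : i ≠ j) (θ : ℝ) (x : EuclideanSpace ℝ (Fin p)) :
    rotFun i j θ (rotFun i j (-θ) x) = x := by
  apply PiLp.ext; intro n
  rcases eq_or_ne n i with rfl | hni
  · rw [rotFun_apply_i, rotFun_apply_i, rotFun_apply_j _ _ hij, Real.cos_neg, Real.sin_neg]
    linear_combination (x n) * (Real.sin_sq_add_cos_sq θ)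
  · rcases eq_or_ne n j with rfl | hnj
    · rw [rotFun_apply_j _ _ hij, rotFun_apply_i, rotFun_apply_j _ _ hij, Real.cos_neg,
        Real.sin_neg]
      linear_combination (x n) * (Real.sin_sq_add_cos_sq θ)
    · rw [rotFun_apply_ne _ _ _ hni hnj, rotFun_apply_ne _ _ _ hni hnj]

def rotE (i j : Fin p) (hij : i ≠ j) (θ : ℝ) :
    EuclideanSpace ℝ (Fin p) ≃ₗ[ℝ] EuclideanSpace ℝ (Fin p) :=
  { rotL i j θ with
    invFun := rotL i j (-θ)
    left_inv := fun x => by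
      have := rot_inv i j hij (-θ) x
      rwa [neg_neg] at this
    right_inv := fun x => rot_inv i j hij θ x }

lemma rot_inner (i j : Fin p) (hij : i ≠ j) (θ : ℝ) (x y : EuclideanSpace ℝ (Fin p)) :
    ∑ n, rotFun i j θ x n * rotFun i j θ y n = ∑ n, x n * y n := by
  rw [sum_split i j hij, sum_split i j hij (f := fun n => x n * y n)]
  have hrest : ∑ n ∈ (Finset.univ.erase i).erase j, rotFun i j θ x n * rotFun i j θ y n
      = ∑ n ∈ (Finset.univ.erase i).erase j, x n * y n := by
    refine Finset.sum_congr rfl fun n hn => ?_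
    have hnj : n ≠ j := (Finset.mem_erase.mp hn).1
    have hni : n ≠ i := (Finset.mem_erase.mp (Finset.mem_erase.mp hn).2).1
    rw [rotFun_apply_ne _ _ _ hni hnj, rotFun_apply_ne _ _ _ hni hnj]
  rw [hrest, rotFun_apply_i, rotFun_apply_i, rotFun_apply_j _ _ hij, rotFun_apply_j _ _ hij]
  linear_combination (x i * y i + x j * y j) * (Real.sin_sq_add_cos_sq θ)

def rotIso (i j : Fin p) (hij : i ≠ j) (θ : ℝ) :
    EuclideanSpace ℝ (Fin p) ≃ₗᵢ[ℝ] EuclideanSpace ℝ (Fin p) :=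
  (rotE i j hij θ).isometryOfInner (fun x y => by
    simp only [PiLp.inner_apply, RCLike.inner_apply, conj_trivial]
    exact rot_inner i j hij θ y x)

lemma rotIso_apply (i j : Fin p) (hij : i ≠ j) (θ : ℝ) (x : EuclideanSpace ℝ (Fin p)) :
    rotIso i j hij θ x = rotFun i j θ x := rfl


lemma wallis_ratio (u v : ℕ) :
    (2*(v:ℝ)+1) * ∫ θ in (0:ℝ)..(2*π), cos θ ^ (2*(u+1)) * sin θ ^ (2*v)
      = (2*(u:ℝ)+1) * ∫ θ in (0:ℝ)..(2*π), cos θ ^ (2*u) * sin θ ^ (2*(v+1)) := by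
  have hderiv : ∀ θ : ℝ, HasDerivAt (fun t => cos t ^ (2*u+1) * sin t ^ (2*v+1))
      ((2*(v:ℝ)+1) * (cos θ ^ (2*(u+1)) * sin θ ^ (2*v))
        - (2*(u:ℝ)+1) * (cos θ ^ (2*u) * sin θ ^ (2*(v+1)))) θ := by
    intro θ
    have h1 := ((Real.hasDerivAt_cos θ).pow (2*u+1)).mul ((Real.hasDerivAt_sin θ).pow (2*v+1))
    refine h1.congr_deriv ?_
    simp only [Nat.add_sub_cancel, Pi.pow_apply]
    push_cast
    ring
  have h2 : ∫ θ in (0:ℝ)..(2*π), ((2*(v:ℝ)+1) * (cos θ ^ (2*(u+1)) * sin θ ^ (2*v))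
        - (2*(u:ℝ)+1) * (cos θ ^ (2*u) * sin θ ^ (2*(v+1))))
      = (cos (2*π) ^ (2*u+1) * sin (2*π) ^ (2*v+1)) - (cos 0 ^ (2*u+1) * sin 0 ^ (2*v+1)) := by
    refine intervalIntegral.integral_eq_sub_of_hasDerivAt (fun θ _ => hderiv θ) ?_
    apply Continuous.intervalIntegrable
    fun_prop
  rw [intervalIntegral.integral_sub ((by fun_prop : Continuous fun θ:ℝ => (2*(v:ℝ)+1) * (cos θ ^ (2*(u+1)) * sin θ ^ (2*v))).intervalIntegrable _ _)
      ((by fun_prop : Continuous fun θ:ℝ => (2*(u:ℝ)+1) * (cos θ ^ (2*u) * sin θ ^ (2*(v+1)))).intervalIntegrable _ _),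
    intervalIntegral.integral_const_mul, intervalIntegral.integral_const_mul] at h2
  have hs : sin (2*π) = 0 := by simp [Real.sin_two_pi]
  have hs0 : sin 0 = 0 := Real.sin_zero
  rw [hs, hs0, zero_pow (by omega : 2*v+1 ≠ 0)] at h2
  simp only [mul_zero, sub_zero, sub_self] at h2
  linarith

lemma circle_avg (u v : ℕ) (a b : ℝ) :
    (∫ θ in (0:ℝ)..(2*π), (a * cos θ + b * sin θ) ^ (2*u) * (b * cos θ - a * sin θ) ^ (2*v))
      = (a^2+b^2)^(u+v) * ∫ θ in (0:ℝ)..(2*π), cos θ ^ (2*u) * sin θ ^ (2*v) := by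
  rcases eq_or_ne (a^2+b^2) 0 with hz | hz
  · have ha : a = 0 := by nlinarith [sq_nonneg a, sq_nonneg b]
    have hb : b = 0 := by nlinarith [sq_nonneg a, sq_nonneg b]
    subst ha; subst hb
    rcases Nat.eq_zero_or_pos (u + v) with huv | huv
    · have hu : u = 0 := by omega
      have hv : v = 0 := by omega
      subst hu; subst hv
      simp
    · have hint : ∀ θ : ℝ, ((0:ℝ) * cos θ + 0 * sin θ) ^ (2*u) * ((0:ℝ) * cos θ - 0 * sin θ) ^ (2*v) = 0 := by
        intro θ
        rcases Nat.eq_zero_or_pos u with hu | hu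
        · have hv : 2*v ≠ 0 := by omega
          simp [zero_pow hv]
        · have hu' : 2*u ≠ 0 := by omega
          simp [zero_pow hu']
      rw [intervalIntegral.integral_congr (fun θ _ => hint θ)]
      simp [zero_pow (by omega : u+v ≠ 0)]
  · set z : ℂ := (a : ℂ) + (b : ℂ) * Complex.I with hzdef
    have hre : z.re = a := by simp [hzdef]
    have him : z.im = b := by simp [hzdef]
    have hns : Complex.normSq z = a^2 + b^2 := by
      rw [Complex.normSq_apply, hre, him]; ring
    have hz0 : z ≠ 0 := by
      intro h
      rw [h] at hns
      simp at hns
      exact hz hns.symm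
    set r := ‖z‖ with hrdef
    set φ := Complex.arg z with hφdef
    have hrpos : 0 < r := by
      rw [hrdef]
      exact (norm_pos_iff.mpr hz0)
    have hr2 : r ^ 2 = a^2 + b^2 := by
      rw [hrdef, Complex.sq_norm, hns]
    have hca : a = r * cos φ := by
      rw [hφdef, Complex.cos_arg hz0, hre, ← hrdef]
      field_simp
    have hcb : b = r * sin φ := by
      rw [hφdef, Complex.sin_arg, him, ← hrdef]
      field_simp
    have key : ∀ θ : ℝ, (a * cos θ + b * sin θ) ^ (2*u) * (b * cos θ - a * sin θ) ^ (2*v)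
        = (a^2+b^2)^(u+v) * (cos (θ - φ) ^ (2*u) * sin (θ - φ) ^ (2*v)) := by
      intro θ
      have e1 : a * cos θ + b * sin θ = r * cos (θ - φ) := by
        rw [Real.cos_sub, hca, hcb]; ring
      have e2 : b * cos θ - a * sin θ = -(r * sin (θ - φ)) := by
        rw [Real.sin_sub, hca, hcb]; ring
      rw [e1, e2, ← hr2]
      have : (-(r * sin (θ - φ))) ^ (2*v) = (r * sin (θ - φ)) ^ (2*v) :=
        Even.neg_pow (even_two_mul v) _
      rw [this, mul_pow, mul_pow]
      ring
    rw [intervalIntegral.integral_congr (fun θ _ => key θ)]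
    rw [intervalIntegral.integral_const_mul]
    congr 1
    have hcomp : (∫ θ in (0:ℝ)..(2*π), cos (θ - φ) ^ (2*u) * sin (θ - φ) ^ (2*v))
        = ∫ θ in (0-φ:ℝ)..(2*π-φ), cos θ ^ (2*u) * sin θ ^ (2*v) :=
      intervalIntegral.integral_comp_sub_right (fun θ => cos θ ^ (2*u) * sin θ ^ (2*v)) φ
    rw [hcomp]
    have hper : Function.Periodic (fun θ : ℝ => cos θ ^ (2*u) * sin θ ^ (2*v)) (2*π) := by
      intro θ
      simp [Real.cos_add_two_pi, Real.sin_add_two_pi]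
    have := hper.intervalIntegral_add_eq (0-φ) 0
    rw [show (2*π - φ) = (0 - φ) + 2*π by ring, this, zero_add]

variable {p : ℕ} {μ : Measure (EuclideanSpace ℝ (Fin p))} [IsProbabilityMeasure μ]

lemma coord_cont (n : Fin p) : Continuous fun x : EuclideanSpace ℝ (Fin p) => x n :=
  (continuous_apply n).comp (PiLp.continuous_ofLp 2 fun _ : Fin p => ℝ)

lemma prodpow_cont (s : Finset (Fin p)) (e : Fin p → ℕ) :
    Continuous fun x : EuclideanSpace ℝ (Fin p) => ∏ n ∈ s, x n ^ (e n) :=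
  continuous_finset_prod _ fun n _ => (coord_cont n).pow _

lemma integrable_of_cont (hsph : ∀ᵐ x ∂μ, ‖x‖ = 1) (f : EuclideanSpace ℝ (Fin p) → ℝ)
    (hf : Continuous f) : Integrable f μ := by
  obtain ⟨C, hC⟩ := (isCompact_sphere (0 : EuclideanSpace ℝ (Fin p)) 1).exists_bound_of_continuousOn
    hf.continuousOn
  refine Integrable.mono' (integrable_const C) hf.aestronglyMeasurable ?_
  filter_upwards [hsph] with x hx
  exact hC x (by simpa [mem_sphere_zero_iff_norm] using hx)

lemma integral_comp_iso
    (hinv : ∀ L : EuclideanSpace ℝ (Fin p) ≃ₗᵢ[ℝ] EuclideanSpace ℝ (Fin p), μ.map L = μ)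
    (L : EuclideanSpace ℝ (Fin p) ≃ₗᵢ[ℝ] EuclideanSpace ℝ (Fin p))
    (f : EuclideanSpace ℝ (Fin p) → ℝ) :
    ∫ x, f (L x) ∂μ = ∫ x, f x ∂μ := by
  conv_rhs => rw [← hinv L]
  have he : μ.map L = μ.map (L.toHomeomorph.toMeasurableEquiv) := rfl
  rw [he, MeasureTheory.integral_map_equiv]
  rfl

set_option linter.unusedSectionVars false

lemma ae_prod_sphere (hsph : ∀ᵐ x ∂μ, ‖x‖ = 1) :
    ∀ᵐ z ∂((volume.restrict (Set.Ioc (0:ℝ) (2*π))).prod μ), ‖z.2‖ = 1 := by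
  rw [ae_iff]
  have hset : {z : ℝ × EuclideanSpace ℝ (Fin p) | ¬ ‖z.2‖ = 1}
      = Set.univ ×ˢ {x : EuclideanSpace ℝ (Fin p) | ‖x‖ = 1}ᶜ := by
    ext z; simp [Set.mem_prod]
  rw [hset, Measure.prod_prod]
  have : μ {x : EuclideanSpace ℝ (Fin p) | ‖x‖ = 1}ᶜ = 0 := by
    have := ae_iff.mp hsph
    simpa [Set.compl_setOf] using this
  rw [this, mul_zero]

lemma rot_reduce
    (hsph : ∀ᵐ x ∂μ, ‖x‖ = 1)
    (hinv : ∀ L : EuclideanSpace ℝ (Fin p) ≃ₗᵢ[ℝ] EuclideanSpace ℝ (Fin p), μ.map L = μ)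
    (i j : Fin p) (hij : i ≠ j) (u v : ℕ) (e : Fin p → ℕ) :
    (2*π) * ∫ x, (x i ^ (2*u) * (x j ^ (2*v)
        * ∏ n ∈ (Finset.univ.erase i).erase j, x n ^ (2 * e n))) ∂μ
      = (∫ θ in (0:ℝ)..(2*π), cos θ ^ (2*u) * sin θ ^ (2*v))
        * ∫ x, ((x i^2 + x j^2) ^ (u+v)
            * ∏ n ∈ (Finset.univ.erase i).erase j, x n ^ (2 * e n)) ∂μ := by
  set W : EuclideanSpace ℝ (Fin p) → ℝ :=
    fun x => ∏ n ∈ (Finset.univ.erase i).erase j, x n ^ (2 * e n) with hW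
  have hWcont : Continuous W := prodpow_cont _ _
  -- the original integrand as a function
  set g : EuclideanSpace ℝ (Fin p) → ℝ := fun y => y i ^ (2*u) * (y j ^ (2*v) * W y) with hg
  have hgcont : Continuous g := ((coord_cont i).pow _).mul (((coord_cont j).pow _).mul hWcont)
  -- step 1: per-θ invariance
  have hstep : ∀ θ : ℝ, (∫ x, g x ∂μ)
      = ∫ x, ((x i * cos θ + x j * sin θ) ^ (2*u)
          * ((x j * cos θ - x i * sin θ) ^ (2*v) * W x)) ∂μ := by
    intro θ
    rw [← integral_comp_iso hinv (rotIso i j hij θ) g]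
    refine integral_congr_ae (Filter.Eventually.of_forall fun x => ?_)
    have hWrot : W (rotIso i j hij θ x) = W x := by
      refine Finset.prod_congr rfl fun n hn => ?_
      have hnj : n ≠ j := (Finset.mem_erase.mp hn).1
      have hni : n ≠ i := (Finset.mem_erase.mp (Finset.mem_erase.mp hn).2).1
      rw [rotIso_apply, rotFun_apply_ne _ _ _ hni hnj]
    simp only [hg]
    rw [hWrot, rotIso_apply, rotFun_apply_i, rotFun_apply_j _ _ hij,
      show cos θ * x i + sin θ * x j = x i * cos θ + x j * sin θ by ring,
      show cos θ * x j - sin θ * x i = x j * cos θ - x i * sin θ by ring]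
  -- finiteness of the restricted measure
  have h2π : (0:ℝ) < 2*π := by positivity
  haveI : IsFiniteMeasure (volume.restrict (Set.Ioc (0:ℝ) (2*π))) := by
    constructor
    rw [Measure.restrict_apply_univ, Real.volume_Ioc]
    exact ENNReal.ofReal_lt_top
  -- Fubini integrand
  set F : ℝ × EuclideanSpace ℝ (Fin p) → ℝ := fun z =>
    (z.2 i * cos z.1 + z.2 j * sin z.1) ^ (2*u)
      * ((z.2 j * cos z.1 - z.2 i * sin z.1) ^ (2*v) * W z.2) with hF
  have hFrot : ∀ z : ℝ × EuclideanSpace ℝ (Fin p), F z = g (rotIso i j hij z.1 z.2) := by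
    intro z
    have hWrot : W (rotIso i j hij z.1 z.2) = W z.2 := by
      refine Finset.prod_congr rfl fun n hn => ?_
      have hnj : n ≠ j := (Finset.mem_erase.mp hn).1
      have hni : n ≠ i := (Finset.mem_erase.mp (Finset.mem_erase.mp hn).2).1
      rw [rotIso_apply, rotFun_apply_ne _ _ _ hni hnj]
    simp only [hF, hg]
    rw [hWrot, rotIso_apply, rotFun_apply_i, rotFun_apply_j _ _ hij]
    ring
  have hFcont : Continuous F := by
    have hci : Continuous fun z : ℝ × EuclideanSpace ℝ (Fin p) => z.2 i :=
      (coord_cont i).comp continuous_snd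
    have hcj : Continuous fun z : ℝ × EuclideanSpace ℝ (Fin p) => z.2 j :=
      (coord_cont j).comp continuous_snd
    have hcos : Continuous fun z : ℝ × EuclideanSpace ℝ (Fin p) => cos z.1 :=
      Real.continuous_cos.comp continuous_fst
    have hsin : Continuous fun z : ℝ × EuclideanSpace ℝ (Fin p) => sin z.1 :=
      Real.continuous_sin.comp continuous_fst
    exact ((hci.mul hcos).add (hcj.mul hsin)).pow _ |>.mul
      ((((hcj.mul hcos).sub (hci.mul hsin)).pow _).mul (hWcont.comp continuous_snd))
  have hFint : Integrable F ((volume.restrict (Set.Ioc (0:ℝ) (2*π))).prod μ) := by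
    obtain ⟨C, hC⟩ := (isCompact_sphere (0 : EuclideanSpace ℝ (Fin p)) 1).exists_bound_of_continuousOn
      hgcont.continuousOn
    refine Integrable.mono' (integrable_const C) hFcont.aestronglyMeasurable ?_
    filter_upwards [ae_prod_sphere hsph] with z hz
    rw [hFrot z]
    refine hC _ ?_
    rw [mem_sphere_zero_iff_norm]
    rw [(rotIso i j hij z.1).norm_map]
    exact hz
  -- integrate hstep over θ ∈ Ioc 0 2π
  have hL : ∫ θ in Set.Ioc (0:ℝ) (2*π), (∫ x, g x ∂μ) = (2*π) * ∫ x, g x ∂μ := by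
    rw [setIntegral_const, measureReal_def, Real.volume_Ioc]
    rw [smul_eq_mul, ENNReal.toReal_ofReal (by linarith)]
    ring_nf
  have hR : ∫ θ in Set.Ioc (0:ℝ) (2*π), (∫ x, g x ∂μ)
      = ∫ θ in Set.Ioc (0:ℝ) (2*π), ∫ x, F (θ, x) ∂μ := by
    refine setIntegral_congr_fun measurableSet_Ioc fun θ _ => ?_
    exact hstep θ
  have hswap : ∫ θ in Set.Ioc (0:ℝ) (2*π), ∫ x, F (θ, x) ∂μ
      = ∫ x, (∫ θ in Set.Ioc (0:ℝ) (2*π), F (θ, x)) ∂μ :=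
    integral_integral_swap (by exact hFint)
  -- pointwise θ-integral via circle_avg
  have hpt : ∀ x : EuclideanSpace ℝ (Fin p),
      (∫ θ in Set.Ioc (0:ℝ) (2*π), F (θ, x))
        = (∫ θ in (0:ℝ)..(2*π), cos θ ^ (2*u) * sin θ ^ (2*v))
            * ((x i^2 + x j^2) ^ (u+v) * W x) := by
    intro x
    have : (∫ θ in Set.Ioc (0:ℝ) (2*π), F (θ, x))
        = ∫ θ in (0:ℝ)..(2*π), ((x i * cos θ + x j * sin θ) ^ (2*u)
            * ((x j * cos θ - x i * sin θ) ^ (2*v))) * W x := by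
      rw [intervalIntegral.integral_of_le h2π.le]
      refine setIntegral_congr_fun measurableSet_Ioc fun θ _ => ?_
      simp only [hF]; ring
    rw [this, intervalIntegral.integral_mul_const, circle_avg]
    ring
  have hRR : ∫ x, (∫ θ in Set.Ioc (0:ℝ) (2*π), F (θ, x)) ∂μ
      = (∫ θ in (0:ℝ)..(2*π), cos θ ^ (2*u) * sin θ ^ (2*v))
          * ∫ x, ((x i^2 + x j^2) ^ (u+v) * W x) ∂μ := by
    rw [← MeasureTheory.integral_const_mul]
    refine integral_congr_ae (Filter.Eventually.of_forall fun x => ?_)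
    exact hpt x
  calc (2*π) * ∫ x, g x ∂μ = ∫ θ in Set.Ioc (0:ℝ) (2*π), (∫ x, g x ∂μ) := hL.symm
    _ = ∫ x, (∫ θ in Set.Ioc (0:ℝ) (2*π), F (θ, x)) ∂μ := by rw [hR, hswap]
    _ = _ := hRR

/-- even moments of μ -/
def mom (μ : Measure (EuclideanSpace ℝ (Fin p))) (a : Fin p → ℕ) : ℝ :=
  ∫ x, ∏ n, x n ^ (2 * a n) ∂μ

lemma mom_pair (hsph : ∀ᵐ x ∂μ, ‖x‖ = 1)
    (hinv : ∀ L : EuclideanSpace ℝ (Fin p) ≃ₗᵢ[ℝ] EuclideanSpace ℝ (Fin p), μ.map L = μ)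
    (i j : Fin p) (hij : i ≠ j) (a : Fin p → ℕ) :
    (2*(a j:ℝ)+1) * mom μ (fun n => a n + if n = i then 1 else 0)
      = (2*(a i:ℝ)+1) * mom μ (fun n => a n + if n = j then 1 else 0) := by
  have hji : j ≠ i := Ne.symm hij
  have h1 : mom μ (fun n => a n + if n = i then 1 else 0)
      = ∫ x, (x i ^ (2*(a i + 1)) * (x j ^ (2 * a j)
          * ∏ n ∈ (Finset.univ.erase i).erase j, x n ^ (2 * a n))) ∂μ := by
    unfold mom
    congr 1; funext x
    rw [prod_split i j hij]
    congr 2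
    · simp
    congr 1
    · simp [hji]
    refine Finset.prod_congr rfl fun n hn => ?_
    have hni : n ≠ i := (Finset.mem_erase.mp (Finset.mem_erase.mp hn).2).1
    simp [hni]
  have h2 : mom μ (fun n => a n + if n = j then 1 else 0)
      = ∫ x, (x i ^ (2*(a i)) * (x j ^ (2 * (a j + 1))
          * ∏ n ∈ (Finset.univ.erase i).erase j, x n ^ (2 * a n))) ∂μ := by
    unfold mom
    congr 1; funext x
    rw [prod_split i j hij]
    congr 2
    · simp [hij]
    congr 1
    · simp
    refine Finset.prod_congr rfl fun n hn => ?_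
    have hnj : n ≠ j := (Finset.mem_erase.mp hn).1
    simp [hnj]
  have e1 := rot_reduce hsph hinv i j hij (a i + 1) (a j) a
  have e2 := rot_reduce hsph hinv i j hij (a i) (a j + 1) a
  have hexp : (a i + 1) + a j = a i + (a j + 1) := by omega
  rw [hexp] at e1
  have ew := wallis_ratio (a i) (a j)
  have e1' : (2*π) * mom μ (fun n => a n + if n = i then 1 else 0)
      = (∫ θ in (0:ℝ)..(2*π), cos θ ^ (2*(a i + 1)) * sin θ ^ (2*(a j)))
        * ∫ x, ((x i^2 + x j^2) ^ (a i + (a j + 1))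
            * ∏ n ∈ (Finset.univ.erase i).erase j, x n ^ (2 * a n)) ∂μ := by
    rw [h1]; exact e1
  have e2' : (2*π) * mom μ (fun n => a n + if n = j then 1 else 0)
      = (∫ θ in (0:ℝ)..(2*π), cos θ ^ (2*(a i)) * sin θ ^ (2*(a j + 1)))
        * ∫ x, ((x i^2 + x j^2) ^ (a i + (a j + 1))
            * ∏ n ∈ (Finset.univ.erase i).erase j, x n ^ (2 * a n)) ∂μ := by
    rw [h2]; exact e2
  refine mul_left_cancel₀ (a := 2*π) (by positivity) ?_
  calc (2*π) * ((2*(a j:ℝ)+1) * mom μ (fun n => a n + if n = i then 1 else 0))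
      = (2*(a j:ℝ)+1) * ((2*π) * mom μ (fun n => a n + if n = i then 1 else 0)) := by ring
    _ = (2*(a i:ℝ)+1) * ((2*π) * mom μ (fun n => a n + if n = j then 1 else 0)) := by
        rw [e1', e2']
        linear_combination (∫ x, ((x i^2 + x j^2) ^ (a i + (a j + 1))
            * ∏ n ∈ (Finset.univ.erase i).erase j, x n ^ (2 * a n)) ∂μ) * ew
    _ = (2*π) * ((2*(a i:ℝ)+1) * mom μ (fun n => a n + if n = j then 1 else 0)) := by ring

lemma mom_norm (hsph : ∀ᵐ x ∂μ, ‖x‖ = 1) (a : Fin p → ℕ) :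
    ∑ j, mom μ (fun n => a n + if n = j then 1 else 0) = mom μ a := by
  unfold mom
  rw [← integral_finset_sum _ (fun j _ => integrable_of_cont hsph _ (prodpow_cont _ _))]
  refine integral_congr_ae ?_
  filter_upwards [hsph] with x hx
  have hsum : ∑ n, x n ^ 2 = 1 := by
    have h := congrArg (fun t => t^2) hx
    simp only [EuclideanSpace.norm_eq] at h
    rw [Real.sq_sqrt (Finset.sum_nonneg fun n _ => by positivity)] at h
    simpa [sq_abs] using h
  have hterm : ∀ j : Fin p, ∏ n, x n ^ (2 * (a n + if n = j then 1 else 0))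
      = x j ^ 2 * ∏ n, x n ^ (2 * a n) := by
    intro j
    have : ∀ n : Fin p, x n ^ (2 * (a n + if n = j then 1 else 0))
        = (if n = j then x n ^ 2 else 1) * x n ^ (2 * a n) := by
      intro n
      split_ifs with h
      · rw [show 2 * (a n + 1) = 2 + 2 * a n by ring, pow_add]
      · rw [one_mul, add_zero]
    rw [Finset.prod_congr rfl fun n _ => this n, Finset.prod_mul_distrib,
      Finset.prod_ite_eq' Finset.univ j (fun n => x n ^ 2)]
    simp
  calc ∑ j, ∏ n, x n ^ (2 * (a n + if n = j then 1 else 0))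
      = ∑ j, x j ^ 2 * ∏ n, x n ^ (2 * a n) := Finset.sum_congr rfl fun j _ => hterm j
    _ = (∑ j, x j ^ 2) * ∏ n, x n ^ (2 * a n) := by rw [Finset.sum_mul]
    _ = ∏ n, x n ^ (2 * a n) := by rw [hsum, one_mul]

lemma mom_step (hsph : ∀ᵐ x ∂μ, ‖x‖ = 1)
    (hinv : ∀ L : EuclideanSpace ℝ (Fin p) ≃ₗᵢ[ℝ] EuclideanSpace ℝ (Fin p), μ.map L = μ)
    (a : Fin p → ℕ) (i : Fin p) :
    mom μ (fun n => a n + if n = i then 1 else 0) * ((p:ℝ) + 2 * (∑ n, a n : ℕ))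
      = (2*(a i:ℝ)+1) * mom μ a := by
  have key : ∀ j : Fin p, (2*(a i:ℝ)+1) * mom μ (fun n => a n + if n = j then 1 else 0)
      = (2*(a j:ℝ)+1) * mom μ (fun n => a n + if n = i then 1 else 0) := by
    intro j
    rcases eq_or_ne j i with rfl | hji
    · rfl
    · exact (mom_pair hsph hinv i j (Ne.symm hji) a).symm
  have h1 : (2*(a i:ℝ)+1) * mom μ a
      = ∑ j, (2*(a j:ℝ)+1) * mom μ (fun n => a n + if n = i then 1 else 0) := by
    rw [← mom_norm hsph a, Finset.mul_sum]
    exact Finset.sum_congr rfl fun j _ => key j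
  have h2 : ∑ j, (2*(a j:ℝ)+1) * mom μ (fun n => a n + if n = i then 1 else 0)
      = ((p:ℝ) + 2 * (∑ n, a n : ℕ)) * mom μ (fun n => a n + if n = i then 1 else 0) := by
    rw [← Finset.sum_mul]
    congr 1
    push_cast
    rw [Finset.sum_add_distrib, ← Finset.mul_sum, Finset.sum_const, Finset.card_univ,
      Fintype.card_fin, nsmul_eq_mul, mul_one]
    ring
  rw [h1, h2]; ring


lemma mom_master (hsph : ∀ᵐ x ∂μ, ‖x‖ = 1)
    (hinv : ∀ L : EuclideanSpace ℝ (Fin p) ≃ₗᵢ[ℝ] EuclideanSpace ℝ (Fin p), μ.map L = μ)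
    (k : ℕ) :
    ∀ a : Fin p → ℕ, (∑ n, a n) = k →
      mom μ a * ∏ r ∈ Finset.range k, ((p:ℝ) + 2*r)
        = ∏ n, (Nat.doubleFactorial (2 * a n - 1) : ℝ) := by
  induction k with
  | zero =>
    intro a ha
    have hz : ∀ n, a n = 0 := by
      intro n
      exact (Finset.sum_eq_zero_iff.mp ha) n (Finset.mem_univ n)
    have : mom μ a = 1 := by
      unfold mom
      have : ∀ x : EuclideanSpace ℝ (Fin p), ∏ n, x n ^ (2 * a n) = 1 := by
        intro x
        refine Finset.prod_eq_one fun n _ => ?_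
        rw [hz n]; norm_num
      simp only [this]
      simp
    rw [this]
    simp [hz, Nat.doubleFactorial]
  | succ k ih =>
    intro a ha
    have hex : ∃ i, a i ≠ 0 := by
      by_contra h
      push_neg at h
      simp [h] at ha
    obtain ⟨i, hi⟩ := hex
    set a' : Fin p → ℕ := fun n => if n = i then a i - 1 else a n with ha'
    have hrep : a = fun n => a' n + if n = i then 1 else 0 := by
      funext n
      by_cases h : n = i <;> simp [ha', h] <;> omega
    have hsum' : (∑ n, a' n) = k := by
      have : (∑ n, a n) = (∑ n, a' n) + 1 := by
        rw [hrep]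
        rw [Finset.sum_add_distrib]
        congr 1
        simp
      omega
    have hstep := mom_step hsph hinv a' i
    rw [hsum'] at hstep
    have hfac : (Nat.doubleFactorial (2 * a i - 1) : ℝ)
        = (2*(a' i:ℝ)+1) * (Nat.doubleFactorial (2 * a' i - 1) : ℝ) := by
      have hai : a i = a' i + 1 := by simp [ha']; omega
      rw [hai]
      rcases Nat.eq_zero_or_pos (a' i) with h0 | h0
      · rw [h0]; norm_num [Nat.doubleFactorial]
      · obtain ⟨m, hm⟩ := Nat.exists_eq_add_of_le h0
        rw [hm]
        have e1 : 2 * (1 + m + 1) - 1 = (2 * (1 + m) - 1) + 2 := by omega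
        rw [e1, Nat.doubleFactorial_add_two]
        push_cast
        have e2 : (2 * (1 + m) - 1 : ℕ) + 2 = 2 * (1 + m) + 1 := by omega
        rw [show ((2 * (1 + m) - 1 : ℕ) : ℝ) + 2 = (((2 * (1 + m) - 1 : ℕ) + 2 : ℕ) : ℝ) by push_cast; ring, e2]
        push_cast
        ring
    have hprodstep : ∏ n, (Nat.doubleFactorial (2 * a n - 1) : ℝ)
        = (2*(a' i:ℝ)+1) * ∏ n, (Nat.doubleFactorial (2 * a' n - 1) : ℝ) := by
      rw [← Finset.mul_prod_erase _ _ (Finset.mem_univ i),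
        ← Finset.mul_prod_erase _ (fun n => (Nat.doubleFactorial (2 * a' n - 1) : ℝ))
          (Finset.mem_univ i)]
      rw [hfac]
      rw [Finset.prod_congr rfl (fun n hn => by
        have hni : n ≠ i := (Finset.mem_erase.mp hn).1
        rw [show a n = a' n by simp [ha', hni]])]
      ring
    rw [Finset.prod_range_succ, hprodstep, ← ih a' hsum', ← hrep] at *
    calc mom μ a * ((∏ r ∈ Finset.range k, ((p:ℝ) + 2*r)) * ((p:ℝ) + 2*k))
        = (mom μ a * ((p:ℝ) + 2*k)) * ∏ r ∈ Finset.range k, ((p:ℝ) + 2*r) := by ring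
      _ = ((2*(a' i:ℝ)+1) * mom μ a') * ∏ r ∈ Finset.range k, ((p:ℝ) + 2*r) := by
          rw [← hstep]
      _ = (2*(a' i:ℝ)+1) * (mom μ a' * ∏ r ∈ Finset.range k, ((p:ℝ) + 2*r)) := by ring

def cnt (i j k l n : Fin p) : ℕ :=
  (if n = i then 1 else 0) + (if n = j then 1 else 0) + (if n = k then 1 else 0)
    + (if n = l then 1 else 0)

def dd (i j : Fin p) : ℝ := if i = j then 1 else 0

lemma cnt_sum (i j k l : Fin p) : ∑ n, cnt i j k l n = 4 := by
  unfold cnt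
  rw [Finset.sum_add_distrib, Finset.sum_add_distrib, Finset.sum_add_distrib]
  simp

lemma prod_eq_of_support (g : Fin p → ℝ) (s : Finset (Fin p)) (h : ∀ n ∉ s, g n = 1) :
    ∏ n, g n = ∏ n ∈ s, g n :=
  (Finset.prod_subset (Finset.subset_univ _) fun n _ hn => h n hn).symm

lemma alg (i j k l : Fin p) :
    ∏ n, (Nat.doubleFactorial (2 * cnt i j k l n - 1) : ℝ)
      = 1 + 2*(dd i j + dd i k + dd i l + dd j k + dd j l + dd k l)
        + 4*(dd i j * dd k l + dd i k * dd j l + dd i l * dd j k)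
        + 8*(dd i j * dd j k + dd i j * dd j l + dd i k * dd k l + dd j k * dd k l)
        + 48*(dd i j * dd j k * dd k l) := by
  by_cases h1 : i = j
  · by_cases h2 : i = k
    · by_cases h3 : i = l
      · -- all equal
        rw [prod_eq_of_support _ {i} (by
          intro n hn
          simp only [Finset.mem_singleton] at hn
          simp [cnt, hn, ← h1, ← h2, ← h3, Nat.doubleFactorial])]
        simp [cnt, dd, ← h1, ← h2, ← h3]
        norm_num [Nat.doubleFactorial]
      · -- i = j = k ≠ l
        rw [prod_eq_of_support _ {i, l} (by
          intro n hn
          simp only [Finset.mem_insert, Finset.mem_singleton, not_or] at hn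
          simp [cnt, hn.1, hn.2, ← h1, ← h2, Nat.doubleFactorial])]
        rw [Finset.prod_insert (by simp [h3])]
        simp [cnt, dd, ← h1, ← h2, h3, Ne.symm h3]
        norm_num [Nat.doubleFactorial]
    · by_cases h3 : i = l
      · -- i = j = l ≠ k
        rw [prod_eq_of_support _ {i, k} (by
          intro n hn
          simp only [Finset.mem_insert, Finset.mem_singleton, not_or] at hn
          simp [cnt, hn.1, hn.2, ← h1, ← h3, Nat.doubleFactorial])]
        rw [Finset.prod_insert (by simp [h2])]
        simp [cnt, dd, ← h1, ← h3, h2, Ne.symm h2]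
        norm_num [Nat.doubleFactorial]
      · by_cases h4 : k = l
        · -- i = j, k = l, i ≠ k
          rw [prod_eq_of_support _ {i, k} (by
            intro n hn
            simp only [Finset.mem_insert, Finset.mem_singleton, not_or] at hn
            simp [cnt, hn.1, hn.2, ← h1, ← h4, Nat.doubleFactorial])]
          rw [Finset.prod_insert (by simp [h2])]
          simp [cnt, dd, ← h1, ← h4, h2, h3, Ne.symm h2, Ne.symm h3]
          norm_num [Nat.doubleFactorial]
        · -- i = j; i,k,l distinct
          rw [prod_eq_of_support _ {i, k, l} (by
            intro n hn
            simp only [Finset.mem_insert, Finset.mem_singleton, not_or] at hn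
            simp [cnt, hn.1, hn.2.1, hn.2.2, ← h1, Nat.doubleFactorial])]
          rw [Finset.prod_insert (by simp [h2, h3]), Finset.prod_insert (by simp [h4])]
          simp [cnt, dd, ← h1, h2, h3, h4, Ne.symm h2, Ne.symm h3, Ne.symm h4]
          norm_num [Nat.doubleFactorial]
  · by_cases h2 : i = k
    · by_cases h3 : i = l
      · -- i = k = l ≠ j
        rw [prod_eq_of_support _ {i, j} (by
          intro n hn
          simp only [Finset.mem_insert, Finset.mem_singleton, not_or] at hn
          simp [cnt, hn.1, hn.2, ← h2, ← h3, Nat.doubleFactorial])]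
        rw [Finset.prod_insert (by simp [h1])]
        simp [cnt, dd, ← h2, ← h3, h1, Ne.symm h1]
        norm_num [Nat.doubleFactorial]
      · by_cases h4 : j = l
        · -- i = k, j = l, i ≠ j
          rw [prod_eq_of_support _ {i, j} (by
            intro n hn
            simp only [Finset.mem_insert, Finset.mem_singleton, not_or] at hn
            simp [cnt, hn.1, hn.2, ← h2, ← h4, Nat.doubleFactorial])]
          rw [Finset.prod_insert (by simp [h1])]
          simp [cnt, dd, ← h2, ← h4, h1, h3, Ne.symm h1, Ne.symm h3]
          norm_num [Nat.doubleFactorial]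
        · -- i = k; i,j,l distinct
          rw [prod_eq_of_support _ {i, j, l} (by
            intro n hn
            simp only [Finset.mem_insert, Finset.mem_singleton, not_or] at hn
            simp [cnt, hn.1, hn.2.1, hn.2.2, ← h2, Nat.doubleFactorial])]
          rw [Finset.prod_insert (by simp [h1, h3]), Finset.prod_insert (by simp [h4])]
          simp [cnt, dd, ← h2, h1, h3, h4, Ne.symm h1, Ne.symm h3, Ne.symm h4]
          norm_num [Nat.doubleFactorial]
    · by_cases h3 : i = l
      · by_cases h4 : j = k
        · -- i = l, j = k, i ≠ j
          rw [prod_eq_of_support _ {i, j} (by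
            intro n hn
            simp only [Finset.mem_insert, Finset.mem_singleton, not_or] at hn
            simp [cnt, hn.1, hn.2, ← h3, ← h4, Nat.doubleFactorial])]
          rw [Finset.prod_insert (by simp [h1])]
          simp [cnt, dd, ← h3, ← h4, h1, h2, Ne.symm h1, Ne.symm h2]
          norm_num [Nat.doubleFactorial]
        · -- i = l; i,j,k distinct
          rw [prod_eq_of_support _ {i, j, k} (by
            intro n hn
            simp only [Finset.mem_insert, Finset.mem_singleton, not_or] at hn
            simp [cnt, hn.1, hn.2.1, hn.2.2, ← h3, Nat.doubleFactorial])]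
          rw [Finset.prod_insert (by simp [h1, h2]), Finset.prod_insert (by simp [h4])]
          simp [cnt, dd, ← h3, h1, h2, h4, Ne.symm h1, Ne.symm h2, Ne.symm h4]
          norm_num [Nat.doubleFactorial]
      · by_cases h4 : j = k
        · by_cases h5 : j = l
          · -- j = k = l ≠ i
            rw [prod_eq_of_support _ {i, j} (by
              intro n hn
              simp only [Finset.mem_insert, Finset.mem_singleton, not_or] at hn
              simp [cnt, hn.1, hn.2, ← h4, ← h5, Nat.doubleFactorial])]
            rw [Finset.prod_insert (by simp [h1])]
            simp [cnt, dd, ← h4, ← h5, h1, Ne.symm h1]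
            norm_num [Nat.doubleFactorial]
          · -- j = k; i,j,l distinct
            rw [prod_eq_of_support _ {i, j, l} (by
              intro n hn
              simp only [Finset.mem_insert, Finset.mem_singleton, not_or] at hn
              simp [cnt, hn.1, hn.2.1, hn.2.2, ← h4, Nat.doubleFactorial])]
            rw [Finset.prod_insert (by simp [h1, h3]), Finset.prod_insert (by simp [h5])]
            simp [cnt, dd, ← h4, h1, h2, h3, h5, Ne.symm h1, Ne.symm h3, Ne.symm h5]
            norm_num [Nat.doubleFactorial]
        · by_cases h5 : j = l
          · -- j = l; i,j,k distinct
            rw [prod_eq_of_support _ {i, j, k} (by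
              intro n hn
              simp only [Finset.mem_insert, Finset.mem_singleton, not_or] at hn
              simp [cnt, hn.1, hn.2.1, hn.2.2, ← h5, Nat.doubleFactorial])]
            rw [Finset.prod_insert (by simp [h1, h2]), Finset.prod_insert (by simp [h4])]
            simp [cnt, dd, ← h5, h1, h2, h3, h4, Ne.symm h1, Ne.symm h2, Ne.symm h4]
            norm_num [Nat.doubleFactorial]
          · by_cases h6 : k = l
            · -- k = l; i,j,k distinct
              rw [prod_eq_of_support _ {i, j, k} (by
                intro n hn
                simp only [Finset.mem_insert, Finset.mem_singleton, not_or] at hn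
                simp [cnt, hn.1, hn.2.1, hn.2.2, ← h6, Nat.doubleFactorial])]
              rw [Finset.prod_insert (by simp [h1, h2]), Finset.prod_insert (by simp [h4])]
              simp [cnt, dd, ← h6, h1, h2, h3, h4, h5, Ne.symm h1, Ne.symm h2, Ne.symm h4]
              norm_num [Nat.doubleFactorial]
            · -- all distinct
              rw [prod_eq_of_support _ {i, j, k, l} (by
                intro n hn
                simp only [Finset.mem_insert, Finset.mem_singleton, not_or] at hn
                simp [cnt, hn.1, hn.2.1, hn.2.2.1, hn.2.2.2, Nat.doubleFactorial])]
              rw [Finset.prod_insert (by simp [h1, h2, h3]),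
                Finset.prod_insert (by simp [h4, h5]), Finset.prod_insert (by simp [h6])]
              simp [cnt, dd, h1, h2, h3, h4, h5, h6, Ne.symm h1, Ne.symm h2, Ne.symm h3,
                Ne.symm h4, Ne.symm h5, Ne.symm h6]


lemma U2 (lam : Fin p → ℝ) :
    ∑ i, ∑ j, ∑ k, (lam i * lam j * lam j * lam k) = (∑ n, lam n^2) * (∑ n, lam n)^2 := by
  calc ∑ i, ∑ j, ∑ k, (lam i * lam j * lam j * lam k)
      = ∑ i, ∑ j, ∑ k, (lam i * (lam j^2 * lam k)) := Finset.sum_congr rfl fun i _ => Finset.sum_congr rfl fun j _ => Finset.sum_congr rfl fun k _ => (by ring)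
    _ = _ := by simp only [← Finset.mul_sum, ← Finset.sum_mul]; all_goals ring

lemma U4 (lam : Fin p → ℝ) :
    ∑ i, ∑ j, ∑ k, (lam i * lam j * lam k * lam k) = (∑ n, lam n^2) * (∑ n, lam n)^2 := by
  calc ∑ i, ∑ j, ∑ k, (lam i * lam j * lam k * lam k)
      = ∑ i, ∑ j, ∑ k, (lam i * (lam j * lam k^2)) := Finset.sum_congr rfl fun i _ => Finset.sum_congr rfl fun j _ => Finset.sum_congr rfl fun k _ => (by ring)
    _ = _ := by simp only [← Finset.mul_sum, ← Finset.sum_mul]; all_goals ring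

lemma U4b (lam : Fin p → ℝ) :
    ∑ i, ∑ j, ∑ k, (lam i * lam j * lam k * lam i) = (∑ n, lam n^2) * (∑ n, lam n)^2 := by
  calc ∑ i, ∑ j, ∑ k, (lam i * lam j * lam k * lam i)
      = ∑ i, ∑ j, ∑ k, (lam i^2 * (lam j * lam k)) := Finset.sum_congr rfl fun i _ => Finset.sum_congr rfl fun j _ => Finset.sum_congr rfl fun k _ => (by ring)
    _ = _ := by simp only [← Finset.mul_sum, ← Finset.sum_mul]; all_goals ring

lemma U4c (lam : Fin p → ℝ) :
    ∑ i, ∑ j, ∑ k, (lam i * lam j * lam k * lam j) = (∑ n, lam n^2) * (∑ n, lam n)^2 := by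
  calc ∑ i, ∑ j, ∑ k, (lam i * lam j * lam k * lam j)
      = ∑ i, ∑ j, ∑ k, (lam i * (lam j^2 * lam k)) := Finset.sum_congr rfl fun i _ => Finset.sum_congr rfl fun j _ => Finset.sum_congr rfl fun k _ => (by ring)
    _ = _ := by simp only [← Finset.mul_sum, ← Finset.sum_mul]; all_goals ring

lemma U5 (lam : Fin p → ℝ) :
    ∑ i, ∑ j, (lam i * lam i * lam j * lam j) = (∑ n, lam n^2)^2 := by
  calc ∑ i, ∑ j, (lam i * lam i * lam j * lam j)
      = ∑ i, ∑ j, (lam i^2 * lam j^2) := Finset.sum_congr rfl fun i _ => Finset.sum_congr rfl fun j _ => (by ring)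
    _ = _ := by simp only [← Finset.mul_sum, ← Finset.sum_mul]; all_goals ring

lemma U6 (lam : Fin p → ℝ) :
    ∑ i, ∑ j, (lam i * lam j * lam i * lam j) = (∑ n, lam n^2)^2 := by
  calc ∑ i, ∑ j, (lam i * lam j * lam i * lam j)
      = ∑ i, ∑ j, (lam i^2 * lam j^2) := Finset.sum_congr rfl fun i _ => Finset.sum_congr rfl fun j _ => (by ring)
    _ = _ := by simp only [← Finset.mul_sum, ← Finset.sum_mul]; all_goals ring

lemma U7b (lam : Fin p → ℝ) :
    ∑ i, ∑ j, (lam i * lam j * lam j * lam i) = (∑ n, lam n^2)^2 := by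
  calc ∑ i, ∑ j, (lam i * lam j * lam j * lam i)
      = ∑ i, ∑ j, (lam i^2 * lam j^2) := Finset.sum_congr rfl fun i _ => Finset.sum_congr rfl fun j _ => (by ring)
    _ = _ := by simp only [← Finset.mul_sum, ← Finset.sum_mul]; all_goals ring

lemma U8 (lam : Fin p → ℝ) :
    ∑ i, ∑ j, (lam i * lam i * lam i * lam j) = (∑ n, lam n^3) * (∑ n, lam n) := by
  calc ∑ i, ∑ j, (lam i * lam i * lam i * lam j)
      = ∑ i, ∑ j, (lam i^3 * lam j) := Finset.sum_congr rfl fun i _ => Finset.sum_congr rfl fun j _ => (by ring)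
    _ = _ := by simp only [← Finset.mul_sum, ← Finset.sum_mul]; all_goals ring

lemma U9b (lam : Fin p → ℝ) :
    ∑ i, ∑ j, (lam i * lam i * lam j * lam i) = (∑ n, lam n^3) * (∑ n, lam n) := by
  calc ∑ i, ∑ j, (lam i * lam i * lam j * lam i)
      = ∑ i, ∑ j, (lam i^3 * lam j) := Finset.sum_congr rfl fun i _ => Finset.sum_congr rfl fun j _ => (by ring)
    _ = _ := by simp only [← Finset.mul_sum, ← Finset.sum_mul]; all_goals ring

lemma U10b (lam : Fin p → ℝ) :
    ∑ i, ∑ j, (lam i * lam j * lam i * lam i) = (∑ n, lam n^3) * (∑ n, lam n) := by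
  calc ∑ i, ∑ j, (lam i * lam j * lam i * lam i)
      = ∑ i, ∑ j, (lam i^3 * lam j) := Finset.sum_congr rfl fun i _ => Finset.sum_congr rfl fun j _ => (by ring)
    _ = _ := by simp only [← Finset.mul_sum, ← Finset.sum_mul]; all_goals ring

lemma U11 (lam : Fin p → ℝ) :
    ∑ i, ∑ j, (lam i * lam j * lam j * lam j) = (∑ n, lam n) * (∑ n, lam n^3) := by
  calc ∑ i, ∑ j, (lam i * lam j * lam j * lam j)
      = ∑ i, ∑ j, (lam i * lam j^3) := Finset.sum_congr rfl fun i _ => Finset.sum_congr rfl fun j _ => (by ring)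
    _ = _ := by simp only [← Finset.mul_sum, ← Finset.sum_mul]; all_goals ring

lemma U12 (lam : Fin p → ℝ) :
    ∑ i, (lam i * lam i * lam i * lam i) = ∑ n, lam n^4 := by
  calc ∑ i, (lam i * lam i * lam i * lam i)
      = ∑ i, (lam i^4) := Finset.sum_congr rfl fun i _ => (by ring)
    _ = _ := by simp only [← Finset.mul_sum, ← Finset.sum_mul]; all_goals ring

lemma T1 (lam : Fin p → ℝ) :
    ∑ x, ∑ y, ∑ z, ∑ w, (lam x * lam y * lam z * lam w) = (∑ n, lam n)^4 := by
  calc ∑ x, ∑ y, ∑ z, ∑ w, (lam x * lam y * lam z * lam w)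
      = ∑ x, ∑ y, ∑ z, ∑ w, (lam x * (lam y * (lam z * lam w))) := Finset.sum_congr rfl fun x _ => Finset.sum_congr rfl fun y _ => Finset.sum_congr rfl fun z _ => Finset.sum_congr rfl fun w _ => (by ring)
    _ = _ := by simp only [← Finset.mul_sum, ← Finset.sum_mul]; all_goals ring

lemma V1 (lam : Fin p → ℝ) :
    ∑ i, (∑ j, ∑ k, lam i * lam j * lam k) * lam i = (∑ n, lam n^2) * (∑ n, lam n)^2 := by
  refine Eq.trans ?_ (U4b lam)
  simp only [Finset.sum_mul]

lemma V2 (lam : Fin p → ℝ) :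
    ∑ i, ∑ j, (∑ k, lam i * lam j * lam k) * lam j = (∑ n, lam n^2) * (∑ n, lam n)^2 := by
  refine Eq.trans ?_ (U4c lam)
  simp only [Finset.sum_mul]

lemma V3 (lam : Fin p → ℝ) :
    ∑ i, (∑ j, lam i * lam j * lam j) * lam i = (∑ n, lam n^2)^2 := by
  refine Eq.trans ?_ (U7b lam)
  simp only [Finset.sum_mul]

lemma V4 (lam : Fin p → ℝ) :
    ∑ i, (∑ j, lam i * lam i * lam j) * lam i = (∑ n, lam n^3) * (∑ n, lam n) := by
  refine Eq.trans ?_ (U9b lam)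
  simp only [Finset.sum_mul]

lemma V5 (lam : Fin p → ℝ) :
    ∑ i, (∑ j, lam i * lam j) * lam i * lam i = (∑ n, lam n^3) * (∑ n, lam n) := by
  refine Eq.trans ?_ (U10b lam)
  simp only [Finset.sum_mul]

lemma W1 (lam : Fin p → ℝ) :
    ∑ i, ∑ j, ∑ k, (lam i * lam i * lam j * lam k) = (∑ n, lam n^2) * (∑ n, lam n)^2 := by
  calc ∑ i, ∑ j, ∑ k, (lam i * lam i * lam j * lam k)
      = ∑ i, ∑ j, ∑ k, (lam i^2 * (lam j * lam k)) := Finset.sum_congr rfl fun i _ => Finset.sum_congr rfl fun j _ => Finset.sum_congr rfl fun k _ => (by ring)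
    _ = _ := by simp only [← Finset.mul_sum, ← Finset.sum_mul]; all_goals ring

lemma W2 (lam : Fin p → ℝ) :
    ∑ i, ∑ j, ∑ k, (lam i * lam j * lam i * lam k) = (∑ n, lam n^2) * (∑ n, lam n)^2 := by
  calc ∑ i, ∑ j, ∑ k, (lam i * lam j * lam i * lam k)
      = ∑ i, ∑ j, ∑ k, (lam i^2 * (lam j * lam k)) := Finset.sum_congr rfl fun i _ => Finset.sum_congr rfl fun j _ => Finset.sum_congr rfl fun k _ => (by ring)
    _ = _ := by simp only [← Finset.mul_sum, ← Finset.sum_mul]; all_goals ring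

lemma sum4 (lam : Fin p → ℝ) :
    ∑ i, ∑ j, ∑ k, ∑ l, (lam i * lam j * lam k * lam l) *
      (1 + 2*(dd i j + dd i k + dd i l + dd j k + dd j l + dd k l)
        + 4*(dd i j * dd k l + dd i k * dd j l + dd i l * dd j k)
        + 8*(dd i j * dd j k + dd i j * dd j l + dd i k * dd k l + dd j k * dd k l)
        + 48*(dd i j * dd j k * dd k l))
    = (∑ n, lam n)^4 + 12*(∑ n, lam n)^2*(∑ n, lam n^2) + 12*(∑ n, lam n^2)^2
      + 32*(∑ n, lam n)*(∑ n, lam n^3) + 48*(∑ n, lam n^4) := by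
  simp only [dd, mul_ite, ite_mul, mul_one, one_mul, mul_zero, zero_mul, mul_add, add_mul,
    Finset.sum_add_distrib, Finset.sum_ite_eq, Finset.sum_ite_eq', Finset.mem_univ, if_true,
    Finset.sum_ite_irrel, Finset.sum_const_zero]
  simp only [← Finset.sum_mul]
  simp only [T1 lam, U2 lam, U4 lam, U4b lam, U4c lam, U5 lam, U6 lam, U7b lam, U8 lam,
    U9b lam, U10b lam, U11 lam, U12 lam, V1 lam, V2 lam, V3 lam, V4 lam, V5 lam, W1 lam, W2 lam]
  ring

lemma isHermitian_of_isSymm (A : Matrix (Fin p) (Fin p) ℝ) (hA : A.IsSymm) : A.IsHermitian := by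
  rw [Matrix.IsHermitian, Matrix.conjTranspose_eq_transpose_of_trivial]
  exact hA

lemma trace_pow_eq (A : Matrix (Fin p) (Fin p) ℝ) (hA : A.IsHermitian) (k : ℕ) :
    (A ^ (k+1)).trace = ∑ n, hA.eigenvalues n ^ (k+1) := by
  set V : Matrix (Fin p) (Fin p) ℝ := (hA.eigenvectorUnitary : Matrix (Fin p) (Fin p) ℝ) with hV
  set D : Matrix (Fin p) (Fin p) ℝ := Matrix.diagonal hA.eigenvalues with hD
  have hVV : star V * V = 1 := Matrix.mem_unitaryGroup_iff'.mp hA.eigenvectorUnitary.2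
  have hbase : A = V * D * star V := by
    have := hA.spectral_theorem
    rw [Unitary.conjStarAlgAut_apply] at this
    rw [this, hV, hD, RCLike.ofReal_real_eq_id, Function.id_comp]
  have hcancel : ∀ X : Matrix (Fin p) (Fin p) ℝ, star V * (V * X) = X := fun X => by
    rw [← Matrix.mul_assoc, hVV, Matrix.one_mul]
  have hAk : ∀ m : ℕ, A ^ (m+1) = V * D ^ (m+1) * star V := by
    intro m
    induction m with
    | zero => simpa using hbase
    | succ m ih =>
      rw [pow_succ, ih, hbase]
      simp only [pow_succ, Matrix.mul_assoc, hcancel]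
  rw [hAk k, Matrix.trace_mul_cycle, hVV, Matrix.one_mul, hD, Matrix.diagonal_pow,
    Matrix.trace_diagonal]
  exact Finset.sum_congr rfl fun n _ => by simp

lemma qform_eigen (A : Matrix (Fin p) (Fin p) ℝ) (hA : A.IsHermitian)
    (y : EuclideanSpace ℝ (Fin p)) :
    ⟪hA.eigenvectorBasis.repr.symm y,
        Matrix.toEuclideanLin A (hA.eigenvectorBasis.repr.symm y)⟫
      = ∑ n, hA.eigenvalues n * y n ^ 2 := by
  set B := hA.eigenvectorBasis with hB
  have hTB : ∀ n, Matrix.toEuclideanLin A (B n) = hA.eigenvalues n • B n := by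
    intro n
    have := hA.mulVec_eigenvectorBasis n
    apply (WithLp.equiv 2 (Fin p → ℝ)).injective
    simpa [Matrix.ofLp_toEuclideanLin_apply] using this
  have hL : B.repr.symm y = ∑ n, y n • B n := (B.sum_repr_symm y).symm
  have hTL : Matrix.toEuclideanLin A (B.repr.symm y)
      = B.repr.symm (WithLp.toLp 2 (fun n => hA.eigenvalues n * y n)) := by
    rw [hL, map_sum]
    rw [show (fun n => hA.eigenvalues n * y n) = fun n => hA.eigenvalues n * y n from rfl]
    rw [← OrthonormalBasis.sum_repr_symm]
    refine Finset.sum_congr rfl fun n _ => ?_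
    rw [_root_.map_smul, hTB n, smul_smul, mul_comm]
  rw [hTL]
  rw [show (⟪B.repr.symm y, B.repr.symm (WithLp.toLp 2 (fun n => hA.eigenvalues n * y n))⟫ : ℝ)
      = ⟪(y : EuclideanSpace ℝ (Fin p)), (WithLp.toLp 2 (fun n => hA.eigenvalues n * y n : Fin p → ℝ) : EuclideanSpace ℝ (Fin p))⟫ from
    B.repr.symm.inner_map_map _ _]
  rw [PiLp.inner_apply]
  refine Finset.sum_congr rfl fun n _ => ?_
  simp [RCLike.inner_apply]
  ring

lemma mom_quad (hsph : ∀ᵐ x ∂μ, ‖x‖ = 1)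
    (hinv : ∀ L : EuclideanSpace ℝ (Fin p) ≃ₗᵢ[ℝ] EuclideanSpace ℝ (Fin p), μ.map L = μ)
    (i j k l : Fin p) :
    (∫ x, x i^2 * x j^2 * x k^2 * x l^2 ∂μ) * ∏ r ∈ Finset.range 4, ((p:ℝ) + 2*r)
      = 1 + 2*(dd i j + dd i k + dd i l + dd j k + dd j l + dd k l)
        + 4*(dd i j * dd k l + dd i k * dd j l + dd i l * dd j k)
        + 8*(dd i j * dd j k + dd i j * dd j l + dd i k * dd k l + dd j k * dd k l)
        + 48*(dd i j * dd j k * dd k l) := by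
  rw [← alg i j k l, ← mom_master hsph hinv 4 (cnt i j k l) (cnt_sum i j k l)]
  congr 1
  unfold mom
  congr 1; funext x
  have hone : ∀ (a : Fin p) (n : Fin p), x n ^ (2 * if n = a then 1 else 0)
      = (if n = a then x n ^ 2 else 1) := by
    intro a n; split_ifs <;> norm_num
  calc x i^2 * x j^2 * x k^2 * x l^2
      = (∏ n, if n = i then x n ^ 2 else 1) * (∏ n, if n = j then x n ^ 2 else 1)
        * (∏ n, if n = k then x n ^ 2 else 1) * (∏ n, if n = l then x n ^ 2 else 1) := by
        rw [Finset.prod_ite_eq' Finset.univ i (fun n => x n ^ 2),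
          Finset.prod_ite_eq' Finset.univ j (fun n => x n ^ 2),
          Finset.prod_ite_eq' Finset.univ k (fun n => x n ^ 2),
          Finset.prod_ite_eq' Finset.univ l (fun n => x n ^ 2)]
        simp
    _ = ∏ n, ((if n = i then x n ^ 2 else 1) * (if n = j then x n ^ 2 else 1)
          * (if n = k then x n ^ 2 else 1) * (if n = l then x n ^ 2 else 1)) := by
        rw [Finset.prod_mul_distrib, Finset.prod_mul_distrib, Finset.prod_mul_distrib]
    _ = ∏ n, x n ^ (2 * cnt i j k l n) := by
        refine Finset.prod_congr rfl fun n _ => ?_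
        rw [← hone i n, ← hone j n, ← hone k n, ← hone l n]
        unfold cnt
        rw [← pow_add, ← pow_add, ← pow_add]
        congr 1
        ring
end SM

theorem stmt3 {Ω : Type*} [MeasureSpace Ω] [IsProbabilityMeasure (ℙ : Measure Ω)]
    {p : ℕ} (hp : 0 < p) (U : Ω → EuclideanSpace ℝ (Fin p))
    (hU : IsUniformOnSphere U)
    (A : Matrix (Fin p) (Fin p) ℝ) (hA : A.IsSymm) :
    (∫ ω, (inner ℝ (U ω) (Matrix.toEuclideanLin A (U ω)) : ℝ) ^ 4)
      = (A.trace ^ 4 + 12 * A.trace ^ 2 * (A * A).trace + 12 * (A * A).trace ^ 2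
          + 32 * A.trace * (A * A * A).trace + 48 * (A * A * A * A).trace)
        / (p * (p + 2) * (p + 4) * (p + 6)) := by
  classical
  obtain ⟨hUmeas, hUsph, hUinv⟩ := hU
  have hA' : A.IsHermitian := SM.isHermitian_of_isSymm A hA
  set lam : Fin p → ℝ := hA'.eigenvalues with hlam
  set μ : Measure (EuclideanSpace ℝ (Fin p)) := Measure.map U ℙ with hμ
  haveI : IsProbabilityMeasure μ := Measure.isProbabilityMeasure_map hUmeas.aemeasurable
  have hmeasset : MeasurableSet {x : EuclideanSpace ℝ (Fin p) | ‖x‖ = 1} :=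
    (isClosed_eq continuous_norm continuous_const).measurableSet
  have hsph : ∀ᵐ x ∂μ, ‖x‖ = 1 :=
    (MeasureTheory.ae_map_iff hUmeas.aemeasurable hmeasset).mpr hUsph
  have hinv : ∀ L : EuclideanSpace ℝ (Fin p) ≃ₗᵢ[ℝ] EuclideanSpace ℝ (Fin p),
      μ.map L = μ := by
    intro L
    rw [hμ, Measure.map_map L.continuous.measurable hUmeas]
    exact hUinv L
  have hTcont : Continuous (Matrix.toEuclideanLin A) :=
    LinearMap.continuous_of_finiteDimensional _
  have hfcont : Continuous fun x : EuclideanSpace ℝ (Fin p) =>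
      (inner ℝ x (Matrix.toEuclideanLin A x) : ℝ)^4 :=
    (continuous_id.inner hTcont).pow 4
  have h0 : (∫ ω, (inner ℝ (U ω) (Matrix.toEuclideanLin A (U ω)) : ℝ)^4)
      = ∫ x, (inner ℝ x (Matrix.toEuclideanLin A x) : ℝ)^4 ∂μ :=
    (integral_map hUmeas.aemeasurable hfcont.aestronglyMeasurable).symm
  have h1 : ∫ x, (inner ℝ x (Matrix.toEuclideanLin A x) : ℝ)^4 ∂μ
      = ∫ x, (∑ n, lam n * x n^2)^4 ∂μ := by
    rw [← SM.integral_comp_iso hinv (hA'.eigenvectorBasis.repr.symm)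
      (fun x => (inner ℝ x (Matrix.toEuclideanLin A x) : ℝ)^4)]
    refine integral_congr_ae (Filter.Eventually.of_forall fun x => ?_)
    simp only
    rw [SM.qform_eigen A hA' x]
  have hexp : ∀ x : EuclideanSpace ℝ (Fin p), (∑ n, lam n * x n^2)^4
      = ∑ i, ∑ j, ∑ k, ∑ l, (lam i * lam j * lam k * lam l)
          * (x i^2 * x j^2 * x k^2 * x l^2) := by
    intro x
    rw [show (∑ n, lam n * x n^2)^4
        = (∑ n, lam n * x n^2) * ((∑ n, lam n * x n^2)
            * ((∑ n, lam n * x n^2) * (∑ n, lam n * x n^2))) by ring]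
    simp only [Finset.sum_mul, Finset.mul_sum]
    refine Finset.sum_congr rfl fun i _ => Finset.sum_congr rfl fun j _ =>
      Finset.sum_congr rfl fun k _ => Finset.sum_congr rfl fun l _ => by ring
  have hc4 : ∀ i j k l : Fin p, Continuous fun x : EuclideanSpace ℝ (Fin p) =>
      (lam i * lam j * lam k * lam l) * (x i^2 * x j^2 * x k^2 * x l^2) := fun i j k l =>
    continuous_const.mul (
      (((SM.coord_cont i).pow 2).mul ((SM.coord_cont j).pow 2) |>.mul
        ((SM.coord_cont k).pow 2)).mul ((SM.coord_cont l).pow 2))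
  have h2 : ∫ x, (∑ i, ∑ j, ∑ k, ∑ l, (lam i * lam j * lam k * lam l)
        * (x i^2 * x j^2 * x k^2 * x l^2)) ∂μ
      = ∑ i, ∑ j, ∑ k, ∑ l, (lam i * lam j * lam k * lam l)
          * ∫ x, x i^2 * x j^2 * x k^2 * x l^2 ∂μ := by
    rw [integral_finset_sum _ (fun i _ => SM.integrable_of_cont hsph _
      (continuous_finset_sum _ fun j _ => continuous_finset_sum _ fun k _ =>
        continuous_finset_sum _ fun l _ => hc4 i j k l))]
    refine Finset.sum_congr rfl fun i _ => ?_
    rw [integral_finset_sum _ (fun j _ => SM.integrable_of_cont hsph _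
      (continuous_finset_sum _ fun k _ => continuous_finset_sum _ fun l _ => hc4 i j k l))]
    refine Finset.sum_congr rfl fun j _ => ?_
    rw [integral_finset_sum _ (fun k _ => SM.integrable_of_cont hsph _
      (continuous_finset_sum _ fun l _ => hc4 i j k l))]
    refine Finset.sum_congr rfl fun k _ => ?_
    rw [integral_finset_sum _ (fun l _ => SM.integrable_of_cont hsph _ (hc4 i j k l))]
    refine Finset.sum_congr rfl fun l _ => ?_
    exact MeasureTheory.integral_const_mul _ _
  have hbig : (∫ x, (∑ n, lam n * x n^2)^4 ∂μ) * (∏ r ∈ Finset.range 4, ((p:ℝ) + 2*r))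
      = (∑ n, lam n)^4 + 12*(∑ n, lam n)^2*(∑ n, lam n^2) + 12*(∑ n, lam n^2)^2
        + 32*(∑ n, lam n)*(∑ n, lam n^3) + 48*(∑ n, lam n^4) := by
    rw [show (∫ x, (∑ n, lam n * x n^2)^4 ∂μ)
        = ∑ i, ∑ j, ∑ k, ∑ l, (lam i * lam j * lam k * lam l)
            * ∫ x, x i^2 * x j^2 * x k^2 * x l^2 ∂μ from by
      rw [← h2]
      exact integral_congr_ae (Filter.Eventually.of_forall fun x => hexp x)]
    rw [← SM.sum4 lam]
    rw [Finset.sum_mul]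
    refine Finset.sum_congr rfl fun i _ => ?_
    rw [Finset.sum_mul]
    refine Finset.sum_congr rfl fun j _ => ?_
    rw [Finset.sum_mul]
    refine Finset.sum_congr rfl fun k _ => ?_
    rw [Finset.sum_mul]
    refine Finset.sum_congr rfl fun l _ => ?_
    rw [mul_assoc, SM.mom_quad hsph hinv i j k l]
  have ht1 : A.trace = ∑ n, lam n := by
    have h := SM.trace_pow_eq A hA' 0
    simpa using h
  have ht2 : (A*A).trace = ∑ n, lam n^2 := by
    have h := SM.trace_pow_eq A hA' 1
    norm_num at h
    rw [show A*A = A^2 from (pow_two A).symm]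
    exact h
  have ht3 : (A*A*A).trace = ∑ n, lam n^3 := by
    have h := SM.trace_pow_eq A hA' 2
    norm_num at h
    rw [show A*A*A = A^3 from by rw [pow_succ, pow_two]]
    exact h
  have ht4 : (A*A*A*A).trace = ∑ n, lam n^4 := by
    have h := SM.trace_pow_eq A hA' 3
    norm_num at h
    rw [show A*A*A*A = A^4 from by rw [pow_succ, pow_succ, pow_two]]
    exact h
  have hppos : (0:ℝ) < (p:ℝ) := by exact_mod_cast hp
  have hCne : ((p:ℝ) * ((p:ℝ) + 2) * ((p:ℝ) + 4) * ((p:ℝ) + 6)) ≠ 0 := by positivity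
  rw [h0, h1, eq_div_iff hCne, ht1, ht2, ht3, ht4]
  rw [show ((p:ℝ) * ((p:ℝ) + 2) * ((p:ℝ) + 4) * ((p:ℝ) + 6))
      = ∏ r ∈ Finset.range 4, ((p:ℝ) + 2*r) from by
    simp [Finset.prod_range_succ]; ring]
  linear_combination hbig
end
end

section
/- Let X₁, X₂, X₃, X₄ be i.i.d. copies of a random vector X in R^p with mean μ, covariance Σ, and finite fourth moments. Then E[(‖X₁ − X₂‖₂² − ‖X₃ − X₄‖₂²)²] = 4 Var(‖X − μ‖₂²) + 8 tr(Σ²). -/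
open MeasureTheory ProbabilityTheory Matrix Filter
open scoped RealInnerProductSpace

noncomputable section

theorem stmt9 {Ω : Type*} [MeasureSpace Ω] [IsProbabilityMeasure (ℙ : Measure Ω)]
    {p : ℕ} (X : Fin 4 → Ω → EuclideanSpace ℝ (Fin p))
    (hmeas : ∀ i, Measurable (X i))
    (hindep : iIndepFun X ℙ)
    (hident : ∀ i, Measure.map (X i) ℙ = Measure.map (X 0) ℙ)
    (μv : EuclideanSpace ℝ (Fin p)) (Sig : Matrix (Fin p) (Fin p) ℝ)
    (hmean : ∀ k, ∫ ω, X 0 ω k = μv k)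
    (hcov : ∀ k l, ∫ ω, (X 0 ω k - μv k) * (X 0 ω l - μv l) = Sig k l)
    (h4 : Integrable (fun ω => ‖X 0 ω‖ ^ 4)) :
    (∫ ω, (‖X 0 ω - X 1 ω‖ ^ 2 - ‖X 2 ω - X 3 ω‖ ^ 2) ^ 2)
      = 4 * variance (fun ω => ‖X 0 ω - μv‖ ^ 2) ℙ + 8 * (Sig * Sig).trace := by
  classical
  set ν : Measure (EuclideanSpace ℝ (Fin p)) := Measure.map (X 0) ℙ with hνdef
  have hνprob : IsProbabilityMeasure ν := Measure.isProbabilityMeasure_map (hmeas 0).aemeasurable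
  -- transfer lemmas
  have L1 : ∀ (i : Fin 4) (f : EuclideanSpace ℝ (Fin p) → ℝ), Measurable f →
      ∫ ω, f (X i ω) = ∫ x, f x ∂ν := by
    intro i f hf
    rw [← hident i, integral_map (hmeas i).aemeasurable hf.aestronglyMeasurable]
  have LInt : ∀ (i : Fin 4) (f : EuclideanSpace ℝ (Fin p) → ℝ), Measurable f → Integrable f ν →
      Integrable (fun ω => f (X i ω)) ℙ := by
    intro i f hf hfi
    rw [← hident i] at hfi
    exact (integrable_map_measure hf.aestronglyMeasurable (hmeas i).aemeasurable).mp hfi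
  -- integrability machinery over ν
  have h4ν : Integrable (fun x : EuclideanSpace ℝ (Fin p) => ‖x‖ ^ 4) ν := by
    rw [hνdef]
    exact (integrable_map_measure ((measurable_norm.pow_const 4).aestronglyMeasurable)
      (hmeas 0).aemeasurable).mpr h4
  have hBint : Integrable (fun x : EuclideanSpace ℝ (Fin p) => ((1 + ‖μv‖) * (1 + ‖x‖)) ^ 4) ν := by
    have h8 : Integrable (fun x : EuclideanSpace ℝ (Fin p) => (1 + ‖μv‖) ^ 4 * (8 * (1 + ‖x‖ ^ 4))) ν :=
      (((integrable_const (1 : ℝ)).add h4ν).const_mul 8).const_mul ((1 + ‖μv‖) ^ 4)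
    refine h8.mono ((((measurable_const.add measurable_norm).const_mul
      (1 + ‖μv‖)).pow_const 4).aestronglyMeasurable) (ae_of_all _ fun x => ?_)
    have h0 : (0 : ℝ) ≤ ‖x‖ := norm_nonneg _
    have h0' : (0 : ℝ) ≤ ‖μv‖ := norm_nonneg _
    have key : (1 + ‖x‖) ^ 4 ≤ 8 * (1 + ‖x‖ ^ 4) := by nlinarith [sq_nonneg (‖x‖ - 1), sq_nonneg (‖x‖ ^ 2 - 1), sq_nonneg (‖x‖ ^ 2 - ‖x‖), sq_nonneg ‖x‖]
    have hg0 : (0:ℝ) ≤ (1 + ‖μv‖) ^ 4 * (8 * (1 + ‖x‖ ^ 4)) := by positivity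
    calc ‖((1 + ‖μv‖) * (1 + ‖x‖)) ^ 4‖ = ((1 + ‖μv‖) * (1 + ‖x‖)) ^ 4 := by
          rw [Real.norm_eq_abs, abs_of_nonneg (by positivity)]
      _ ≤ (1 + ‖μv‖) ^ 4 * (8 * (1 + ‖x‖ ^ 4)) := by
          rw [mul_pow]
          have h14 : (0:ℝ) ≤ (1 + ‖μv‖) ^ 4 := by positivity
          nlinarith [h14, key]
      _ ≤ ‖(1 + ‖μv‖) ^ 4 * (8 * (1 + ‖x‖ ^ 4))‖ := le_abs_self _
  have keyI : ∀ f : EuclideanSpace ℝ (Fin p) → ℝ, Measurable f →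
      (∀ x, |f x| ≤ ((1 + ‖μv‖) * (1 + ‖x‖)) ^ 4) → Integrable f ν := by
    intro f hf hb
    refine hBint.mono hf.aestronglyMeasurable (ae_of_all _ fun x => ?_)
    rw [Real.norm_eq_abs]
    exact (hb x).trans (le_abs_self _)
  have hmono : ∀ (x : EuclideanSpace ℝ (Fin p)) (d : ℕ), d ≤ 4 →
      ‖x - μv‖ ^ d ≤ ((1 + ‖μv‖) * (1 + ‖x‖)) ^ 4 := by
    intro x d hd
    have hb1 : ‖x - μv‖ ≤ (1 + ‖μv‖) * (1 + ‖x‖) := by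
      have := norm_sub_le x μv
      nlinarith [norm_nonneg x, norm_nonneg μv]
    have hB1 : (1 : ℝ) ≤ (1 + ‖μv‖) * (1 + ‖x‖) := by
      nlinarith [norm_nonneg x, norm_nonneg μv]
    calc ‖x - μv‖ ^ d ≤ ((1 + ‖μv‖) * (1 + ‖x‖)) ^ d :=
          pow_le_pow_left₀ (norm_nonneg _) hb1 d
      _ ≤ ((1 + ‖μv‖) * (1 + ‖x‖)) ^ 4 := pow_le_pow_right₀ hB1 hd
  -- coordinate functions
  have habs : ∀ (y : EuclideanSpace ℝ (Fin p)) (k : Fin p), |y k| ≤ ‖y‖ := by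
    intro y k
    have h : (y k) ^ 2 ≤ ∑ i, (y i) ^ 2 :=
      Finset.single_le_sum (f := fun i => (y i) ^ 2) (fun i _ => sq_nonneg _) (Finset.mem_univ k)
    have h2 : ‖y‖ ^ 2 = ∑ i, (y i) ^ 2 := by
      rw [EuclideanSpace.norm_eq, Real.sq_sqrt (by positivity)]; simp [sq_abs]
    nlinarith [abs_nonneg (y k), norm_nonneg y, sq_abs (y k)]
  set z : Fin p → EuclideanSpace ℝ (Fin p) → ℝ := fun k x => (x - μv) k with hzdef
  have mz : ∀ k, Measurable (z k) :=
    fun k => (measurable_pi_apply k).comp (Measurable.comp (WithLp.measurable_ofLp _ _) (measurable_id.sub measurable_const))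
  have hzabs : ∀ (x : EuclideanSpace ℝ (Fin p)) (k : Fin p), |z k x| ≤ ‖x - μv‖ := fun x k => habs (x - μv) k
  set q : EuclideanSpace ℝ (Fin p) → ℝ := fun x => ‖x - μv‖ ^ 2 with hqdef
  have mq : Measurable q := (measurable_id.sub measurable_const).norm.pow_const 2
  have hqabs : ∀ x : EuclideanSpace ℝ (Fin p), |q x| = ‖x - μv‖ ^ 2 := fun x => abs_of_nonneg (by positivity)
  -- ν-integrability of all monomials
  have Iz : ∀ k, Integrable (z k) ν := by
    intro k
    refine keyI _ (mz k) fun x => ?_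
    calc |z k x| ≤ ‖x - μv‖ := hzabs x k
      _ = ‖x - μv‖ ^ 1 := (pow_one _).symm
      _ ≤ _ := hmono x 1 (by norm_num)
  have Izz : ∀ k l, Integrable (fun x => z k x * z l x) ν := by
    intro k l
    refine keyI _ ((mz k).mul (mz l)) fun x => ?_
    calc |z k x * z l x| = |z k x| * |z l x| := abs_mul _ _
      _ ≤ ‖x - μv‖ * ‖x - μv‖ :=
          mul_le_mul (hzabs x k) (hzabs x l) (abs_nonneg _) (norm_nonneg _)
      _ = ‖x - μv‖ ^ 2 := (sq _).symm
      _ ≤ _ := hmono x 2 (by norm_num)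
  have Iq : Integrable q ν := by
    refine keyI _ mq fun x => ?_
    rw [hqabs]; exact hmono x 2 (by norm_num)
  have Iq2 : Integrable (fun x => q x ^ 2) ν := by
    refine keyI _ (mq.pow_const 2) fun x => ?_
    rw [abs_of_nonneg (by positivity)]
    calc q x ^ 2 = ‖x - μv‖ ^ 4 := by rw [hqdef]; ring
      _ ≤ _ := hmono x 4 le_rfl
  have Iqz : ∀ k, Integrable (fun x => q x * z k x) ν := by
    intro k
    refine keyI _ (mq.mul (mz k)) fun x => ?_
    calc |q x * z k x| = |q x| * |z k x| := abs_mul _ _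
      _ ≤ ‖x - μv‖ ^ 2 * ‖x - μv‖ := by
          rw [hqabs]
          exact mul_le_mul_of_nonneg_left (hzabs x k) (by positivity)
      _ = ‖x - μv‖ ^ 3 := by ring
      _ ≤ _ := hmono x 3 (by norm_num)
  have Izzzz : ∀ k l, Integrable (fun x => (z k x * z l x) * (z k x * z l x)) ν := by
    intro k l
    refine keyI _ (((mz k).mul (mz l)).mul ((mz k).mul (mz l))) fun x => ?_
    have h1 : |z k x * z l x| ≤ ‖x - μv‖ ^ 2 := by
      calc |z k x * z l x| = |z k x| * |z l x| := abs_mul _ _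
        _ ≤ ‖x - μv‖ * ‖x - μv‖ :=
            mul_le_mul (hzabs x k) (hzabs x l) (abs_nonneg _) (norm_nonneg _)
        _ = ‖x - μv‖ ^ 2 := (sq _).symm
    calc |(z k x * z l x) * (z k x * z l x)| = |z k x * z l x| * |z k x * z l x| := abs_mul _ _
      _ ≤ ‖x - μv‖ ^ 2 * ‖x - μv‖ ^ 2 :=
          mul_le_mul h1 h1 (abs_nonneg _) (by positivity)
      _ = ‖x - μv‖ ^ 4 := by ring
      _ ≤ _ := hmono x 4 le_rfl
  -- moments over ν
  have hm0 : ∀ k, ∫ x, z k x ∂ν = 0 := by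
    intro k
    have h1 : ∫ x, (x : EuclideanSpace ℝ (Fin p)) k ∂ν = μv k := by
      rw [← L1 0 (fun x => x k) ((measurable_pi_apply k).comp (WithLp.measurable_ofLp _ _))]; exact hmean k
    have hi : Integrable (fun x : EuclideanSpace ℝ (Fin p) => x k) ν := by
      refine keyI _ ((measurable_pi_apply k).comp (WithLp.measurable_ofLp _ _)) fun x => ?_
      have h2 : |x k| ≤ ‖x‖ := habs x k
      have hB1 : (1 : ℝ) ≤ (1 + ‖μv‖) * (1 + ‖x‖) := by
        nlinarith [norm_nonneg x, norm_nonneg μv]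
      calc |x k| ≤ ‖x‖ := h2
        _ ≤ (1 + ‖μv‖) * (1 + ‖x‖) := by nlinarith [norm_nonneg x, norm_nonneg μv]
        _ = ((1 + ‖μv‖) * (1 + ‖x‖)) ^ 1 := (pow_one _).symm
        _ ≤ ((1 + ‖μv‖) * (1 + ‖x‖)) ^ 4 := pow_le_pow_right₀ hB1 (by norm_num)
    have hz : (fun x : EuclideanSpace ℝ (Fin p) => z k x) = fun x => x k - μv k := rfl
    rw [hz, integral_sub hi (integrable_const _), h1, integral_const]
    simp
  have hcovν : ∀ k l, ∫ x, z k x * z l x ∂ν = Sig k l := by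
    intro k l
    rw [← L1 0 (fun x => z k x * z l x) ((mz k).mul (mz l))]
    exact hcov k l
  have hsymm : ∀ k l, Sig k l = Sig l k := by
    intro k l
    rw [← hcov k l, ← hcov l k]
    simp_rw [mul_comm]
  -- factorization via independence
  have L2 : ∀ (i j : Fin 4), i ≠ j → ∀ f g : EuclideanSpace ℝ (Fin p) → ℝ,
      Measurable f → Measurable g → Integrable f ν → Integrable g ν →
      Integrable (fun ω => f (X i ω) * g (X j ω)) ℙ ∧
      ∫ ω, f (X i ω) * g (X j ω) = (∫ x, f x ∂ν) * (∫ x, g x ∂ν) := by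
    intro i j hij f g hf hg hfi hgi
    have hind : IndepFun (fun ω => f (X i ω)) (fun ω => g (X j ω)) ℙ :=
      (hindep.indepFun hij).comp hf hg
    have h1 : Integrable (fun ω => f (X i ω)) ℙ := LInt i f hf hfi
    have h2 : Integrable (fun ω => g (X j ω)) ℙ := LInt j g hg hgi
    refine ⟨hind.integrable_mul h1 h2, ?_⟩
    have h3 := hind.integral_fun_mul_eq_mul_integral h1.aestronglyMeasurable h2.aestronglyMeasurable
    rw [L1 i f hf, L1 j g hg] at h3
    exact h3
  set m := ∫ x, q x ∂ν with hmdef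
  set s := ∫ x, q x ^ 2 ∂ν with hsdef
  set t := ∑ k, ∑ l, Sig k l ^ 2 with htdef
  have key2 : ∀ i j : Fin 4, i ≠ j →
      Integrable (fun ω => ‖X i ω - X j ω‖ ^ 2) ℙ ∧
      Integrable (fun ω => (‖X i ω - X j ω‖ ^ 2) ^ 2) ℙ ∧
      (∫ ω, ‖X i ω - X j ω‖ ^ 2) = 2 * m ∧
      (∫ ω, (‖X i ω - X j ω‖ ^ 2) ^ 2) = 2 * s + 2 * m ^ 2 + 4 * t := by
    intro i j hij
    have hpt : ∀ ω, ‖X i ω - X j ω‖ ^ 2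
        = q (X i ω) + q (X j ω) - 2 * ∑ k, z k (X i ω) * z k (X j ω) := by
      intro ω
      have h0 : X i ω - X j ω = (X i ω - μv) - (X j ω - μv) := by abel
      have hin : ⟪X i ω - μv, X j ω - μv⟫ = ∑ k, z k (X i ω) * z k (X j ω) := by
        simp [PiLp.inner_apply, RCLike.inner_apply, conj_trivial, hzdef]
        exact Finset.sum_congr rfl fun _ _ => mul_comm _ _
      rw [h0, norm_sub_sq_real, hin]
      simp only [hqdef]
      ring
    have Ia : ∀ i' : Fin 4, Integrable (fun ω => q (X i' ω)) ℙ := fun i' => LInt i' q mq Iq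
    have Ia2 : ∀ i' : Fin 4, Integrable (fun ω => q (X i' ω) ^ 2) ℙ := fun i' =>
      LInt i' (fun x => q x ^ 2) (mq.pow_const 2) Iq2
    have Iaa : Integrable (fun ω => q (X i ω) * q (X j ω)) ℙ :=
      (L2 i j hij q q mq mq Iq Iq).1
    have Izij : ∀ k, Integrable (fun ω => z k (X i ω) * z k (X j ω)) ℙ := fun k =>
      (L2 i j hij (z k) (z k) (mz k) (mz k) (Iz k) (Iz k)).1
    have IS : Integrable (fun ω => ∑ k, z k (X i ω) * z k (X j ω)) ℙ :=
      integrable_finset_sum _ (fun k _ => Izij k)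
    have hvq : ∀ i' : Fin 4, ∫ ω, q (X i' ω) = m := fun i' => by
      rw [hmdef]; exact L1 i' q mq
    have hva2 : ∀ i' : Fin 4, ∫ ω, q (X i' ω) ^ 2 = s := fun i' => by
      rw [hsdef]; exact L1 i' (fun x => q x ^ 2) (mq.pow_const 2)
    have hvS : ∫ ω, (∑ k, z k (X i ω) * z k (X j ω)) = 0 := by
      rw [integral_finset_sum _ (fun k _ => Izij k)]
      refine Finset.sum_eq_zero fun k _ => ?_
      rw [(L2 i j hij (z k) (z k) (mz k) (mz k) (Iz k) (Iz k)).2, hm0 k, mul_zero]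
    have hvaa : ∫ ω, q (X i ω) * q (X j ω) = m * m := by
      rw [(L2 i j hij q q mq mq Iq Iq).2, ← hmdef]
    have hSS : ∀ ω, (∑ k, z k (X i ω) * z k (X j ω)) * (∑ k, z k (X i ω) * z k (X j ω))
        = ∑ k, ∑ l, (z k (X i ω) * z l (X i ω)) * (z k (X j ω) * z l (X j ω)) := by
      intro ω
      rw [Finset.sum_mul_sum]
      exact Finset.sum_congr rfl fun k _ => Finset.sum_congr rfl fun l _ => by ring
    have Ikl : ∀ k l, Integrable
        (fun ω => (z k (X i ω) * z l (X i ω)) * (z k (X j ω) * z l (X j ω))) ℙ := fun k l =>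
      (L2 i j hij (fun x => z k x * z l x) (fun x => z k x * z l x)
        ((mz k).mul (mz l)) ((mz k).mul (mz l)) (Izz k l) (Izz k l)).1
    have ISS : Integrable (fun ω =>
        (∑ k, z k (X i ω) * z k (X j ω)) * (∑ k, z k (X i ω) * z k (X j ω))) ℙ := by
      simp only [hSS]
      exact integrable_finset_sum _ (fun k _ => integrable_finset_sum _ (fun l _ => Ikl k l))
    have hvSS : ∫ ω, (∑ k, z k (X i ω) * z k (X j ω)) * (∑ k, z k (X i ω) * z k (X j ω)) = t := by
      simp only [hSS]
      rw [integral_finset_sum _ (fun k _ => integrable_finset_sum _ (fun l _ => Ikl k l)), htdef]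
      refine Finset.sum_congr rfl fun k _ => ?_
      rw [integral_finset_sum _ (fun l _ => Ikl k l)]
      refine Finset.sum_congr rfl fun l _ => ?_
      rw [(L2 i j hij (fun x => z k x * z l x) (fun x => z k x * z l x)
        ((mz k).mul (mz l)) ((mz k).mul (mz l)) (Izz k l) (Izz k l)).2, hcovν k l, sq]
    have hqSi : ∀ ω, q (X i ω) * (∑ k, z k (X i ω) * z k (X j ω))
        = ∑ k, (q (X i ω) * z k (X i ω)) * z k (X j ω) := by
      intro ω
      rw [Finset.mul_sum]
      exact Finset.sum_congr rfl fun k _ => by ring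
    have IqSi : Integrable (fun ω => q (X i ω) * (∑ k, z k (X i ω) * z k (X j ω))) ℙ := by
      simp only [hqSi]
      exact integrable_finset_sum _ fun k _ =>
        (L2 i j hij (fun x => q x * z k x) (z k) (mq.mul (mz k)) (mz k) (Iqz k) (Iz k)).1
    have hvqSi : ∫ ω, q (X i ω) * (∑ k, z k (X i ω) * z k (X j ω)) = 0 := by
      simp only [hqSi]
      rw [integral_finset_sum _ (fun k _ =>
        (L2 i j hij (fun x => q x * z k x) (z k) (mq.mul (mz k)) (mz k) (Iqz k) (Iz k)).1)]
      refine Finset.sum_eq_zero fun k _ => ?_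
      rw [(L2 i j hij (fun x => q x * z k x) (z k) (mq.mul (mz k)) (mz k) (Iqz k) (Iz k)).2,
        hm0 k, mul_zero]
    have hqSj : ∀ ω, q (X j ω) * (∑ k, z k (X i ω) * z k (X j ω))
        = ∑ k, z k (X i ω) * (q (X j ω) * z k (X j ω)) := by
      intro ω
      rw [Finset.mul_sum]
      exact Finset.sum_congr rfl fun k _ => by ring
    have IqSj : Integrable (fun ω => q (X j ω) * (∑ k, z k (X i ω) * z k (X j ω))) ℙ := by
      simp only [hqSj]
      exact integrable_finset_sum _ fun k _ =>
        (L2 i j hij (z k) (fun x => q x * z k x) (mz k) (mq.mul (mz k)) (Iz k) (Iqz k)).1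
    have hvqSj : ∫ ω, q (X j ω) * (∑ k, z k (X i ω) * z k (X j ω)) = 0 := by
      simp only [hqSj]
      rw [integral_finset_sum _ (fun k _ =>
        (L2 i j hij (z k) (fun x => q x * z k x) (mz k) (mq.mul (mz k)) (Iz k) (Iqz k)).1)]
      refine Finset.sum_eq_zero fun k _ => ?_
      rw [(L2 i j hij (z k) (fun x => q x * z k x) (mz k) (mq.mul (mz k)) (Iz k) (Iqz k)).2,
        hm0 k, zero_mul]
    have he : (fun ω => ‖X i ω - X j ω‖ ^ 2)
        = fun ω => q (X i ω) + (q (X j ω) + (-2) * ∑ k, z k (X i ω) * z k (X j ω)) :=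
      funext fun ω => by rw [hpt ω]; ring
    have hIA : Integrable (fun ω => ‖X i ω - X j ω‖ ^ 2) ℙ := by
      rw [he]; exact (Ia i).add ((Ia j).add (IS.const_mul (-2)))
    have K2 : Integrable (fun ω => (-2 : ℝ) * ∑ k, z k (X i ω) * z k (X j ω)) ℙ :=
      IS.const_mul (-2)
    have K12 : Integrable (fun ω => q (X j ω) + (-2 : ℝ) * ∑ k, z k (X i ω) * z k (X j ω)) ℙ :=
      (Ia j).add K2
    have hEA : (∫ ω, ‖X i ω - X j ω‖ ^ 2) = 2 * m := by
      rw [he, integral_add (Ia i) K12, integral_add (Ia j) K2, integral_const_mul,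
        hvS, hvq i, hvq j]
      ring
    have he2 : (fun ω => (‖X i ω - X j ω‖ ^ 2) ^ 2)
        = fun ω => q (X i ω) ^ 2 + (q (X j ω) ^ 2 + (2 * (q (X i ω) * q (X j ω))
          + (4 * ((∑ k, z k (X i ω) * z k (X j ω)) * (∑ k, z k (X i ω) * z k (X j ω)))
          + ((-4) * (q (X i ω) * (∑ k, z k (X i ω) * z k (X j ω)))
          + (-4) * (q (X j ω) * (∑ k, z k (X i ω) * z k (X j ω))))))) :=
      funext fun ω => by rw [hpt ω]; ring
    have J3 : Integrable (fun ω => 2 * (q (X i ω) * q (X j ω))) ℙ := Iaa.const_mul 2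
    have J4 : Integrable (fun ω => 4 * ((∑ k, z k (X i ω) * z k (X j ω))
        * (∑ k, z k (X i ω) * z k (X j ω)))) ℙ := ISS.const_mul 4
    have J5 : Integrable (fun ω =>
        (-4) * (q (X i ω) * (∑ k, z k (X i ω) * z k (X j ω)))) ℙ := IqSi.const_mul (-4)
    have J6 : Integrable (fun ω =>
        (-4) * (q (X j ω) * (∑ k, z k (X i ω) * z k (X j ω)))) ℙ := IqSj.const_mul (-4)
    have R5 : Integrable (fun ω =>
        (-4) * (q (X i ω) * (∑ k, z k (X i ω) * z k (X j ω)))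
          + (-4) * (q (X j ω) * (∑ k, z k (X i ω) * z k (X j ω)))) ℙ := J5.add J6
    have R4 : Integrable (fun ω =>
        4 * ((∑ k, z k (X i ω) * z k (X j ω)) * (∑ k, z k (X i ω) * z k (X j ω)))
          + ((-4) * (q (X i ω) * (∑ k, z k (X i ω) * z k (X j ω)))
          + (-4) * (q (X j ω) * (∑ k, z k (X i ω) * z k (X j ω))))) ℙ := J4.add R5
    have R3 : Integrable (fun ω =>
        2 * (q (X i ω) * q (X j ω))
          + (4 * ((∑ k, z k (X i ω) * z k (X j ω)) * (∑ k, z k (X i ω) * z k (X j ω)))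
          + ((-4) * (q (X i ω) * (∑ k, z k (X i ω) * z k (X j ω)))
          + (-4) * (q (X j ω) * (∑ k, z k (X i ω) * z k (X j ω)))))) ℙ := J3.add R4
    have R2 : Integrable (fun ω =>
        q (X j ω) ^ 2 + (2 * (q (X i ω) * q (X j ω))
          + (4 * ((∑ k, z k (X i ω) * z k (X j ω)) * (∑ k, z k (X i ω) * z k (X j ω)))
          + ((-4) * (q (X i ω) * (∑ k, z k (X i ω) * z k (X j ω)))
          + (-4) * (q (X j ω) * (∑ k, z k (X i ω) * z k (X j ω))))))) ℙ := (Ia2 j).add R3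
    have hIA2 : Integrable (fun ω => (‖X i ω - X j ω‖ ^ 2) ^ 2) ℙ := by
      rw [he2]
      exact (Ia2 i).add R2
    refine ⟨hIA, hIA2, hEA, ?_⟩
    rw [he2, integral_add (Ia2 i) R2, integral_add (Ia2 j) R3, integral_add J3 R4,
      integral_add J4 R5, integral_add J5 J6, integral_const_mul, integral_const_mul,
      integral_const_mul, integral_const_mul, hva2 i, hva2 j, hvaa, hvSS, hvqSi, hvqSj]
    ring
  -- independence of the two pair-statistics
  have hphi : Measurable (fun uv : (EuclideanSpace ℝ (Fin p)) × (EuclideanSpace ℝ (Fin p)) =>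
      ‖uv.1 - uv.2‖ ^ 2) := (measurable_fst.sub measurable_snd).norm.pow_const 2
  have hABind : IndepFun (fun ω => ‖X 0 ω - X 1 ω‖ ^ 2) (fun ω => ‖X 2 ω - X 3 ω‖ ^ 2) ℙ := by
    have h := hindep.indepFun_prodMk_prodMk hmeas 0 1 2 3
      (by decide) (by decide) (by decide) (by decide)
    exact h.comp hphi hphi
  obtain ⟨hIA, hIA2, hEA, hEA2⟩ := key2 0 1 (by decide)
  obtain ⟨hIB, hIB2, hEB, hEB2⟩ := key2 2 3 (by decide)
  have hvAB : ∫ ω, (‖X 0 ω - X 1 ω‖ ^ 2) * (‖X 2 ω - X 3 ω‖ ^ 2) = (2 * m) * (2 * m) := by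
    have h := hABind.integral_fun_mul_eq_mul_integral hIA.aestronglyMeasurable hIB.aestronglyMeasurable
    rw [hEA, hEB] at h
    exact h
  have IAB : Integrable (fun ω => (‖X 0 ω - X 1 ω‖ ^ 2) * (‖X 2 ω - X 3 ω‖ ^ 2)) ℙ :=
    hABind.integrable_mul hIA hIB
  -- variance identity
  have hq2P : Integrable (fun ω => (‖X 0 ω - μv‖ ^ 2) ^ 2) ℙ :=
    LInt 0 (fun x => q x ^ 2) (mq.pow_const 2) Iq2
  have haem : AEStronglyMeasurable (fun ω => ‖X 0 ω - μv‖ ^ 2) (ℙ : Measure Ω) :=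
    (LInt 0 q mq Iq).aestronglyMeasurable
  have hmem : MemLp (fun ω => ‖X 0 ω - μv‖ ^ 2) 2 ℙ :=
    (memLp_two_iff_integrable_sq haem).mpr hq2P
  have hvar : variance (fun ω => ‖X 0 ω - μv‖ ^ 2) ℙ = s - m ^ 2 := by
    rw [variance_eq_sub hmem]
    have e1 : ℙ[(fun ω => ‖X 0 ω - μv‖ ^ 2) ^ 2] = s := by
      rw [hsdef]; exact L1 0 (fun x => q x ^ 2) (mq.pow_const 2)
    have e2 : ℙ[fun ω => ‖X 0 ω - μv‖ ^ 2] = m := by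
      rw [hmdef]; exact L1 0 q mq
    rw [e1, e2]
  -- trace identity
  have htrace : (Sig * Sig).trace = t := by
    rw [htdef]
    rw [Matrix.trace]
    simp only [Matrix.diag, Matrix.mul_apply]
    refine Finset.sum_congr rfl fun k _ => Finset.sum_congr rfl fun l _ => ?_
    rw [← hsymm k l]
    exact (sq _).symm
  -- final computation
  have hfin : (fun ω => (‖X 0 ω - X 1 ω‖ ^ 2 - ‖X 2 ω - X 3 ω‖ ^ 2) ^ 2)
      = fun ω => (‖X 0 ω - X 1 ω‖ ^ 2) ^ 2 + ((‖X 2 ω - X 3 ω‖ ^ 2) ^ 2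
        + (-2 : ℝ) * ((‖X 0 ω - X 1 ω‖ ^ 2) * (‖X 2 ω - X 3 ω‖ ^ 2))) :=
    funext fun ω => by ring
  have KAB : Integrable (fun ω =>
      (-2 : ℝ) * ((‖X 0 ω - X 1 ω‖ ^ 2) * (‖X 2 ω - X 3 ω‖ ^ 2))) ℙ := IAB.const_mul (-2)
  have KB : Integrable (fun ω => (‖X 2 ω - X 3 ω‖ ^ 2) ^ 2
      + (-2 : ℝ) * ((‖X 0 ω - X 1 ω‖ ^ 2) * (‖X 2 ω - X 3 ω‖ ^ 2))) ℙ := hIB2.add KAB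
  rw [hfin, integral_add hIA2 KB, integral_add hIB2 KAB, integral_const_mul,
    hEA2, hEB2, hvAB, hvar, htrace]
  ring
end
end
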